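/- arXiv:2412.08400 — 9 statements merged into one kernel-verified Lean document; each statement's English description precedes it below -/
import Mathlib

section
/- Let F ∈ F_κ⁺(Y,E) and F♭ = κ⋆F. Suppose v♭ : X → ℝ is a positive vector and ρ > 0 a scalar with Σ_{x'∈X} F♭(x,x')·v♭(x') = ρ·v♭(x) for all x ∈ X. Define Q : Y × Y → ℝ by Q(y,y') = F(y,y')·v♭(κ(y')) / (ρ·v♭(κ(y))). Then Q ∈ W_κ(Y,E) (Q is row-stochastic, positive exactly on E, and κ-lumpable), and moreover κ⋆Q(x,x') = F♭(x,x')·v♭(x') / (ρ·v♭(x)) for all (x,x') ∈ D; in other words, s-normalization preserves κ-lumpability and commutes with lumping. -/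
open Finset

variable {Y X : Type*}

/-- `F ∈ F(Y,E)` : matrices supported on the edge set `E`. -/
def MemF (E : Set (Y × Y)) (F : Y → Y → ℝ) : Prop :=
  ∀ y y' : Y, (y, y') ∉ E → F y y' = 0

/-- `F ∈ F⁺(Y,E)` : member of `F(Y,E)` positive on every edge of `E`. -/
def MemFpos (E : Set (Y × Y)) (F : Y → Y → ℝ) : Prop :=
  MemF E F ∧ ∀ y y' : Y, (y, y') ∈ E → 0 < F y y'

/-- Every row sums to `1`. -/
def RowStochastic [Fintype Y] (F : Y → Y → ℝ) : Prop :=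
  ∀ y : Y, ∑ y' : Y, F y y' = 1

/-- `F ∈ W(Y,E)` : row-stochastic members of `F⁺(Y,E)`. -/
def MemW [Fintype Y] (E : Set (Y × Y)) (F : Y → Y → ℝ) : Prop :=
  MemFpos E F ∧ RowStochastic F

/-- The lumped edge set `D = κ₂(E) = {(κ y, κ y') : (y,y') ∈ E}`. -/
def lumpedEdges (E : Set (Y × Y)) (κ : Y → X) : Set (X × X) :=
  {p | ∃ q ∈ E, κ q.1 = p.1 ∧ κ q.2 = p.2}

/-- `blockSum κ F y x' = Σ_{y' ∈ S_{x'}} F y y'`. -/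
def blockSum [Fintype Y] [DecidableEq X] (κ : Y → X) (F : Y → Y → ℝ) (y : Y) (x' : X) : ℝ :=
  ∑ y' ∈ Finset.univ.filter (fun y' => κ y' = x'), F y y'

/-- Kemeny–Snell `κ`-lumpability of a matrix `F`. -/
def Lumpable [Fintype Y] [DecidableEq X] (E : Set (Y × Y)) (κ : Y → X) (F : Y → Y → ℝ) : Prop :=
  ∀ x x' : X, (x, x') ∈ lumpedEdges E κ →
    ∀ y₁ y₂ : Y, κ y₁ = x → κ y₂ = x → blockSum κ F y₁ x' = blockSum κ F y₂ x'

/-- `W_κ(Y,E)` : the set of `κ`-lumpable irreducible stochastic matrices. -/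
def Wkappa [Fintype Y] [DecidableEq X] (E : Set (Y × Y)) (κ : Y → X) : Set (Y → Y → ℝ) :=
  {P | MemW E P ∧ Lumpable E κ P}

/-- Strong connectivity of the digraph with edge set `E`. -/
def StronglyConnected {V : Type*} (E : Set (V × V)) : Prop :=
  ∀ v v' : V, Relation.ReflTransGen (fun a b => (a, b) ∈ E) v v'

/-- Hadamard geometric combination `F₀^{⊙(1−t)} ⊙ F₁^{⊙t}` (entries off `E` set to `0`). -/
noncomputable def hadGeom (E : Set (Y × Y)) (F₀ F₁ : Y → Y → ℝ) (t : ℝ) : Y → Y → ℝ :=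
  fun y y' => E.indicator (fun p => F₀ p.1 p.2 ^ (1 - t) * F₁ p.1 p.2 ^ t) (y, y')

/-- `Q` is an s-normalization of `F`. -/
def IsSNorm [Fintype Y] (F Q : Y → Y → ℝ) : Prop :=
  ∃ (ρ : ℝ) (v : Y → ℝ), 0 < ρ ∧ (∀ y, 0 < v y) ∧
    (∀ y y' : Y, Q y y' = F y y' * v y' / (ρ * v y)) ∧ RowStochastic Q

/-- e-geodesic closedness of a family `V ⊆ W(Y,E)`. -/
def EGeodClosed [Fintype Y] (E : Set (Y × Y)) (V : Set (Y → Y → ℝ)) : Prop :=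
  ∀ P₀ ∈ V, ∀ P₁ ∈ V, ∀ (t : ℝ) (Q : Y → Y → ℝ),
    IsSNorm (hadGeom E P₀ P₁ t) Q → Q ∈ V

/-- `(x,x')` is a merging block of `(Y,E)` with respect to `κ`. -/
def MergingBlock (E : Set (Y × Y)) (κ : Y → X) (x x' : X) : Prop :=
  ∃ y y₁' y₂' : Y, κ y = x ∧ κ y₁' = x' ∧ κ y₂' = x' ∧ y₁' ≠ y₂' ∧
    (y, y₁') ∈ E ∧ (y, y₂') ∈ E

/-- `(x,x')` is a multi-row merging block: a merging block with `|S_x| ≥ 2`. -/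
def MultiRowMergingBlock (E : Set (Y × Y)) (κ : Y → X) (x x' : X) : Prop :=
  MergingBlock E κ x x' ∧ ∃ y₁ y₂ : Y, y₁ ≠ y₂ ∧ κ y₁ = x ∧ κ y₂ = x

/-- Entrywise logarithm on `E`, zero off `E`. -/
noncomputable def logMat (E : Set (Y × Y)) (F : Y → Y → ℝ) : Y → Y → ℝ :=
  fun y y' => E.indicator (fun p => Real.log (F p.1 p.2)) (y, y')

/-- Entrywise exponential on `E`, zero off `E`. -/
noncomputable def expMat (E : Set (Y × Y)) (G : Y → Y → ℝ) : Y → Y → ℝ :=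
  fun y y' => E.indicator (fun p => Real.exp (G p.1 p.2)) (y, y')

/-- `G_κ(Y,E) = { log F : F ∈ F_κ⁺(Y,E) }`. -/
def Gkappa [Fintype Y] [DecidableEq X] (E : Set (Y × Y)) (κ : Y → X) : Set (Y → Y → ℝ) :=
  {G | ∃ F : Y → Y → ℝ, MemFpos E F ∧ Lumpable E κ F ∧ G = logMat E F}

/-- `N(Y,E)`: matrices of the form `(y,y') ↦ f y' - f y + c` on `E`, zero off `E`. -/
def Nset (E : Set (Y × Y)) : Set (Y → Y → ℝ) :=
  {N | MemF E N ∧ ∃ (f : Y → ℝ) (c : ℝ), ∀ y y' : Y, (y, y') ∈ E → N y y' = f y' - f y + c}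

/-- s-normalization of a positive `κ`-lumpable matrix via a positive
right eigenvector of the lumped matrix yields an element of `W_κ(Y,E)`, and
s-normalization commutes with lumping. -/
theorem sNormalization_preserves_lumpability [Fintype Y] [Fintype X] [DecidableEq X]
    (E : Set (Y × Y)) (κ : Y → X) (hsurj : Function.Surjective κ)
    (hconn : StronglyConnected E)
    (F : Y → Y → ℝ) (hF : MemFpos E F) (hFl : Lumpable E κ F)
    (Fb : X → X → ℝ) (hFb : ∀ (y : Y) (x' : X), Fb (κ y) x' = blockSum κ F y x')
    (vb : X → ℝ) (hvb : ∀ x : X, 0 < vb x) (ρ : ℝ) (hρ : 0 < ρ)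
    (heig : ∀ x : X, ∑ x' : X, Fb x x' * vb x' = ρ * vb x)
    (Q : Y → Y → ℝ)
    (hQ : ∀ y y' : Y, Q y y' = F y y' * vb (κ y') / (ρ * vb (κ y))) :
    (MemW E Q ∧ Lumpable E κ Q) ∧
      ∀ x x' : X, (x, x') ∈ lumpedEdges E κ → ∀ y : Y, κ y = x →
        blockSum κ Q y x' = Fb x x' * vb x' / (ρ * vb x) := by
  have hv : ∀ y : Y, 0 < vb (κ y) := fun y => hvb (κ y)
  -- key block sum formula
  have hblock : ∀ (y : Y) (x' : X),
      blockSum κ Q y x' = Fb (κ y) x' * vb x' / (ρ * vb (κ y)) := by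
    intro y x'
    unfold blockSum
    rw [hFb]
    unfold blockSum
    rw [Finset.sum_mul, Finset.sum_div]
    apply Finset.sum_congr rfl
    intro y' hy'
    simp only [Finset.mem_filter] at hy'
    rw [hQ, hy'.2]
  have hrow : RowStochastic Q := by
    intro y
    have hsum : ∑ y' : Y, F y y' * vb (κ y') = ρ * vb (κ y) := by
      rw [← heig (κ y)]
      rw [← Finset.sum_fiberwise (g := κ) (f := fun y' => F y y' * vb (κ y'))]
      apply Finset.sum_congr rfl
      intro x' _
      rw [hFb]
      unfold blockSum
      rw [Finset.sum_mul]
      apply Finset.sum_congr rfl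
      intro y' hy'
      simp only [Finset.mem_filter] at hy'
      rw [hy'.2]
    calc ∑ y' : Y, Q y y' = (∑ y' : Y, F y y' * vb (κ y')) / (ρ * vb (κ y)) := by
          rw [Finset.sum_div]; exact Finset.sum_congr rfl fun y' _ => hQ y y'
      _ = 1 := by rw [hsum]; exact div_self (ne_of_gt (mul_pos hρ (hv y)))
  refine ⟨⟨⟨⟨?_, ?_⟩, hrow⟩, ?_⟩, ?_⟩
  · intro y y' h
    rw [hQ, hF.1 y y' h, zero_mul, zero_div]
  · intro y y' h
    rw [hQ]
    exact div_pos (mul_pos (hF.2 y y' h) (hvb _)) (mul_pos hρ (hvb _))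
  · intro x x' _ y₁ y₂ h₁ h₂
    rw [hblock, hblock, h₁, h₂]
  · intro x x' _ y hy
    rw [hblock, hy]
end

section
/- Let F ∈ F_κ⁺(Y,E) be a positive κ-lumpable matrix with strongly connected support graph (Y,E). If v : Y → ℝ is a positive vector and ρ ∈ ℝ a scalar with Σ_{y'∈Y} F(y,y')·v(y') = ρ·v(y) for all y ∈ Y, then v is constant on the partition induced by κ: for every x ∈ X and all y₁, y₂ ∈ S_x, v(y₁) = v(y₂). -/
open Finset

variable {Y X : Type*}

/-- a positive right eigenvector of a positive `κ`-lumpable matrix with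
strongly connected support graph is constant on the partition induced by `κ`. -/
theorem eigenvector_constant_on_partition [Fintype Y] [Fintype X] [DecidableEq X]
    (E : Set (Y × Y)) (κ : Y → X) (hsurj : Function.Surjective κ)
    (hconn : StronglyConnected E)
    (F : Y → Y → ℝ) (hF : MemFpos E F) (hFl : Lumpable E κ F)
    (v : Y → ℝ) (hv : ∀ y : Y, 0 < v y) (ρ : ℝ)
    (heig : ∀ y : Y, ∑ y' : Y, F y y' * v y' = ρ * v y) :
    ∀ (x : X) (y₁ y₂ : Y), κ y₁ = x → κ y₂ = x → v y₁ = v y₂ := by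
  classical
  intro x y₁ y₂ h₁ h₂
  -- nonnegativity of F
  have hFnn : ∀ y y' : Y, 0 ≤ F y y' := by
    intro y y'
    by_cases h : (y, y') ∈ E
    · exact (hF.2 y y' h).le
    · exact (hF.1 y y' h).ge
  -- fibers of κ
  have hTne : ∀ x : X, (Finset.univ.filter (fun y => κ y = x)).Nonempty := by
    intro x
    obtain ⟨y, hy⟩ := hsurj x
    exact ⟨y, by simp [hy]⟩
  set μ : X → ℝ := fun x => (Finset.univ.filter (fun y => κ y = x)).inf' (hTne x) v with hμ
  set w : Y → ℝ := fun y => μ (κ y) with hw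
  have hwv : ∀ y : Y, w y ≤ v y := by
    intro y
    exact Finset.inf'_le v (by simp)
  have hwmin : ∀ y y' : Y, κ y = κ y' → w y ≤ v y' := by
    intro y y' h
    exact Finset.inf'_le v (by simp [h])
  have hwpos : ∀ y : Y, 0 < w y := by
    intro y
    obtain ⟨z, hz, hzeq⟩ := Finset.exists_mem_eq_inf' (hTne (κ y)) v
    simp only [hw, hμ]
    rw [hzeq]
    exact hv z
  -- block sums vanish off the lumped edge set
  have hblock0 : ∀ (y : Y) (x' : X), (κ y, x') ∉ lumpedEdges E κ → blockSum κ F y x' = 0 := by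
    intro y x' hD
    apply Finset.sum_eq_zero
    intro z hz
    simp only [Finset.mem_filter] at hz
    by_contra hne
    have hE : (y, z) ∈ E := by
      by_contra hE
      exact hne (hF.1 y z hE)
    exact hD ⟨(y, z), hE, rfl, hz.2⟩
  -- block sums only depend on the block of the row index
  have hblock : ∀ (y y' : Y), κ y = κ y' → ∀ x' : X, blockSum κ F y x' = blockSum κ F y' x' := by
    intro y y' hk x'
    by_cases hD : (κ y, x') ∈ lumpedEdges E κ
    · exact hFl (κ y) x' hD y y' rfl hk.symm
    · rw [hblock0 y x' hD, hblock0 y' x' (by rwa [← hk])]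
  -- rewrite ∑ F u y' * w y' as a sum of block sums
  have hrew : ∀ u : Y, ∑ y' : Y, F u y' * w y' = ∑ x' : X, blockSum κ F u x' * μ x' := by
    intro u
    rw [← Finset.sum_fiberwise Finset.univ κ (fun y' => F u y' * w y')]
    refine Finset.sum_congr rfl ?_
    intro x' _
    rw [blockSum, Finset.sum_mul]
    refine Finset.sum_congr rfl ?_
    intro z hz
    simp only [Finset.mem_filter] at hz
    simp [hw, hz.2]
  -- superinvariance: F w ≤ ρ w pointwise
  have hsup : ∀ y : Y, ∑ y' : Y, F y y' * w y' ≤ ρ * w y := by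
    intro y
    obtain ⟨z, hz, hzeq⟩ := Finset.exists_mem_eq_inf' (hTne (κ y)) v
    simp only [Finset.mem_filter] at hz
    have hwz : w y = v z := by simp only [hw, hμ]; rw [hzeq]
    calc ∑ y' : Y, F y y' * w y'
        = ∑ x' : X, blockSum κ F y x' * μ x' := hrew y
      _ = ∑ x' : X, blockSum κ F z x' * μ x' := by
          refine Finset.sum_congr rfl fun x' _ => ?_
          rw [hblock y z hz.2.symm x']
      _ = ∑ y' : Y, F z y' * w y' := (hrew z).symm
      _ ≤ ∑ y' : Y, F z y' * v y' := by
          refine Finset.sum_le_sum fun y' _ => ?_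
          exact mul_le_mul_of_nonneg_left (hwv y') (hFnn z y')
      _ = ρ * v z := heig z
      _ = ρ * w y := by rw [hwz]
  -- maximal ratio point
  obtain ⟨y₀, -, hy₀⟩ := Finset.exists_max_image Finset.univ (fun y => v y / w y)
      ⟨y₁, Finset.mem_univ _⟩
  set c : ℝ := v y₀ / w y₀ with hc
  have hcpos : 0 < c := div_pos (hv y₀) (hwpos y₀)
  have hvc : ∀ y : Y, v y ≤ c * w y := by
    intro y
    have := hy₀ y (Finset.mem_univ y)
    exact (div_le_iff₀ (hwpos y)).mp this
  -- equality set is closed under edges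
  have hZstep : ∀ y : Y, v y = c * w y → ∀ y' : Y, (y, y') ∈ E → v y' = c * w y' := by
    intro y hy y' hyE
    have hsum0 : ∑ y'' : Y, F y y'' * (c * w y'' - v y'') = 0 := by
      have hle : ∑ y'' : Y, F y y'' * (c * w y'' - v y'') ≤ 0 := by
        have h1 : ∑ y'' : Y, F y y'' * (c * w y'' - v y'')
            = c * (∑ y'' : Y, F y y'' * w y'') - ρ * v y := by
          rw [← heig y, Finset.mul_sum, ← Finset.sum_sub_distrib]
          refine Finset.sum_congr rfl fun z _ => by ring
        rw [h1, hy]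
        have h2 : c * (∑ y'' : Y, F y y'' * w y'') ≤ c * (ρ * w y) :=
          mul_le_mul_of_nonneg_left (hsup y) hcpos.le
        linarith [h2]
      have hge : 0 ≤ ∑ y'' : Y, F y y'' * (c * w y'' - v y'') := by
        refine Finset.sum_nonneg fun z _ => ?_
        exact mul_nonneg (hFnn y z) (by linarith [hvc z])
      linarith
    have := (Finset.sum_eq_zero_iff_of_nonneg (fun z _ =>
        mul_nonneg (hFnn y z) (by linarith [hvc z]))).mp hsum0 y' (Finset.mem_univ y')
    have hFpos := hF.2 y y' hyE
    have : c * w y' - v y' = 0 := by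
      rcases mul_eq_zero.mp this with h | h
      · exact absurd h hFpos.ne'
      · exact h
    linarith
  -- propagate along strong connectivity
  have hZ : ∀ y : Y, v y = c * w y := by
    intro y
    have hpath := hconn y₀ y
    induction hpath with
    | refl =>
        rw [hc, div_mul_cancel₀ _ (hwpos y₀).ne']
    | tail h hE ih =>
        exact hZstep _ ih _ hE
  -- conclude
  rw [hZ y₁, hZ y₂]
  simp only [hw, h₁, h₂]
end

section
/- Assume F_κ⁺(Y,E) is nonempty and let v : Y → ℝ be a positive vector. The following are equivalent: (i) for every F ∈ F_κ⁺(Y,E), the conjugated matrix (y,y') ↦ v(y)·F(y,y')/v(y') belongs to F_κ⁺(Y,E); (ii) for every x ∈ X and all y₁, y₂ ∈ S_x, v(y₁) = v(y₂). -/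
open Finset

variable {Y X : Type*}

section AuxClosure

variable [Fintype Y] [DecidableEq X]

private lemma memFpos_nonneg {E : Set (Y × Y)} {F : Y → Y → ℝ} (hF : MemFpos E F) (a b : Y) :
    0 ≤ F a b := by
  by_cases h : (a, b) ∈ E
  · exact (hF.2 a b h).le
  · simp [hF.1 a b h]

private lemma blockSum_pos' {E : Set (Y × Y)} {κ : Y → X} {F : Y → Y → ℝ}
    (hF : MemFpos E F) {y u : Y} (hu : (y, u) ∈ E) :
    0 < blockSum κ F y (κ u) := by
  have hmem : u ∈ Finset.univ.filter (fun y' => κ y' = κ u) := by simp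
  have h1 := Finset.single_le_sum (f := fun b => F y b)
    (fun b _ => memFpos_nonneg hF y b) hmem
  have hpos := hF.2 y u hu
  unfold blockSum
  linarith

private lemma factA {E : Set (Y × Y)} {κ : Y → X} {F : Y → Y → ℝ}
    (hF : MemFpos E F) (hL : Lumpable E κ F)
    {x x' : X} (hD : (x, x') ∈ lumpedEdges E κ) {y : Y} (hy : κ y = x) :
    ∃ u : Y, κ u = x' ∧ (y, u) ∈ E := by
  obtain ⟨q, hqE, hq1, hq2⟩ := hD
  have h1 : blockSum κ F q.1 x' = blockSum κ F y x' :=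
    hL x x' ⟨q, hqE, hq1, hq2⟩ q.1 y hq1 hy
  have hq2' : κ q.2 = x' := hq2
  have h2 : 0 < blockSum κ F q.1 x' := by
    rw [← hq2']; exact blockSum_pos' hF hqE
  by_contra hcon
  push_neg at hcon
  have hz : blockSum κ F y x' = 0 := by
    unfold blockSum
    refine Finset.sum_eq_zero fun b hb => ?_
    exact hF.1 y b (hcon b (by simpa using (Finset.mem_filter.1 hb).2))
  rw [hz] at h1; linarith

private lemma vconst_on_nbhd {E : Set (Y × Y)} {κ : Y → X} {v : Y → ℝ}
    (hv : ∀ y, 0 < v y)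
    (H : ∀ F : Y → Y → ℝ, MemFpos E F → Lumpable E κ F →
      Lumpable E κ (fun y y' => v y * F y y' / v y'))
    {F : Y → Y → ℝ} (hF : MemFpos E F) (hL : Lumpable E κ F)
    {y yt u u' : Y} (hyy : κ y = κ yt) (hyne : y ≠ yt)
    (hu : (y, u) ∈ E) (hu' : (y, u') ∈ E) (huu' : κ u = κ u') :
    v u = v u' := by
  classical
  by_cases hune : u = u'
  · rw [hune]
  set ε := F y u' / 2 with hεdef
  have hε : 0 < ε := by
    have := hF.2 y u' hu'; rw [hεdef]; linarith
  set F' : Y → Y → ℝ := fun a b =>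
    F a b + (if a = y ∧ b = u then ε else 0) - (if a = y ∧ b = u' then ε else 0) with hF'def
  have hF'pos : MemFpos E F' := by
    constructor
    · intro a b hab
      have h1 : ¬(a = y ∧ b = u) := fun ⟨ha, hb⟩ => hab (ha ▸ hb ▸ hu)
      have h2 : ¬(a = y ∧ b = u') := fun ⟨ha, hb⟩ => hab (ha ▸ hb ▸ hu')
      simp [hF'def, h1, h2, hF.1 a b hab]
    · intro a b hab
      have hFab := hF.2 a b hab
      have hFyu' := hF.2 y u' hu'
      simp only [hF'def]
      split_ifs with h1 h2 h2
      · linarith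
      · linarith
      · obtain ⟨ha, hb⟩ := h2
        rw [ha, hb, hεdef]
        rw [ha, hb] at hFab
        linarith
      · linarith
  have hbs : ∀ (a : Y) (z : X), blockSum κ F' a z = blockSum κ F a z := by
    intro a z
    unfold blockSum
    simp only [hF'def]
    rw [Finset.sum_sub_distrib, Finset.sum_add_distrib]
    have e1 : ∀ (w : Y), ∑ b ∈ Finset.univ.filter (fun y' => κ y' = z),
        (if a = y ∧ b = w then ε else 0) = if a = y ∧ κ w = z then ε else 0 := by
      intro w
      by_cases ha : a = y
      · simp only [ha, true_and]
        rw [Finset.sum_ite_eq' (Finset.univ.filter (fun y' => κ y' = z)) w (fun _ => ε)]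
        simp
      · simp [ha]
    rw [e1 u, e1 u', huu']
    ring
  have hF'lump : Lumpable E κ F' := by
    intro x x' hD a b ha hb
    rw [hbs, hbs]
    exact hL x x' hD a b ha hb
  have hDm : (κ y, κ u) ∈ lumpedEdges E κ := ⟨(y, u), hu, rfl, rfl⟩
  have e' := H F' hF'pos hF'lump (κ y) (κ u) hDm y yt rfl hyy.symm
  have e := H F hF hL (κ y) (κ u) hDm y yt rfl hyy.symm
  have hrow_t : blockSum κ (fun a b => v a * F' a b / v b) yt (κ u)
      = blockSum κ (fun a b => v a * F a b / v b) yt (κ u) := by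
    unfold blockSum
    refine Finset.sum_congr rfl fun b _ => ?_
    have h1 : ¬(yt = y ∧ b = u) := fun ⟨h, _⟩ => hyne h.symm
    have h2 : ¬(yt = y ∧ b = u') := fun ⟨h, _⟩ => hyne h.symm
    simp [hF'def, h1, h2]
  have hrow_y : blockSum κ (fun a b => v a * F' a b / v b) y (κ u)
      = blockSum κ (fun a b => v a * F a b / v b) y (κ u) + v y * ε / v u - v y * ε / v u' := by
    unfold blockSum
    have hterm : ∀ b : Y, v y * F' y b / v b
        = v y * F y b / v b + (if b = u then v y * ε / v b else 0)
          - (if b = u' then v y * ε / v b else 0) := by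
      intro b
      simp only [hF'def, eq_self_iff_true, true_and]
      split_ifs with h1 h2 h2
      · exact absurd (h1.symm.trans h2) hune
      · ring
      · ring
      · ring
    rw [Finset.sum_congr rfl fun b _ => hterm b]
    rw [Finset.sum_sub_distrib, Finset.sum_add_distrib]
    rw [Finset.sum_ite_eq' (Finset.univ.filter (fun y' => κ y' = κ u)) u
      (fun b => v y * ε / v b)]
    rw [Finset.sum_ite_eq' (Finset.univ.filter (fun y' => κ y' = κ u)) u'
      (fun b => v y * ε / v b)]
    have hmu : u ∈ Finset.univ.filter (fun y' => κ y' = κ u) := by simp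
    have hmu' : u' ∈ Finset.univ.filter (fun y' => κ y' = κ u) := by simp [huu'.symm]
    rw [if_pos hmu, if_pos hmu']
  rw [hrow_y, hrow_t, ← e] at e'
  have hd : v y * ε / v u = v y * ε / v u' := by linarith
  have h' := (div_eq_div_iff (hv u).ne' (hv u').ne').1 hd
  have hne0 : v y * ε ≠ 0 := (mul_pos (hv y) hε).ne'
  exact (mul_left_cancel₀ hne0 h').symm

private lemma cross_rel {E : Set (Y × Y)} {κ : Y → X} {v : Y → ℝ}
    (hv : ∀ y, 0 < v y)
    (H : ∀ F : Y → Y → ℝ, MemFpos E F → Lumpable E κ F →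
      Lumpable E κ (fun y y' => v y * F y y' / v y'))
    {F : Y → Y → ℝ} (hF : MemFpos E F) (hL : Lumpable E κ F)
    {y₁ y₂ u₁ u₂ : Y} (h12 : κ y₁ = κ y₂) (hne : y₁ ≠ y₂)
    (hu₁ : (y₁, u₁) ∈ E) (hu₂ : (y₂, u₂) ∈ E) (hκu : κ u₂ = κ u₁) :
    v y₁ * v u₂ = v y₂ * v u₁ := by
  have hD : (κ y₁, κ u₁) ∈ lumpedEdges E κ := ⟨(y₁, u₁), hu₁, rfl, rfl⟩
  have hrow1 : blockSum κ (fun a b => v a * F a b / v b) y₁ (κ u₁)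
      = v y₁ * blockSum κ F y₁ (κ u₁) / v u₁ := by
    unfold blockSum
    have hcg : ∀ b ∈ Finset.univ.filter (fun y' => κ y' = κ u₁),
        v y₁ * F y₁ b / v b = v y₁ * F y₁ b / v u₁ := by
      intro b hb
      by_cases hbE : (y₁, b) ∈ E
      · have hb' : κ b = κ u₁ := by simpa using (Finset.mem_filter.1 hb).2
        rw [vconst_on_nbhd hv H hF hL h12 hne hbE hu₁ hb']
      · simp [hF.1 y₁ b hbE]
    rw [Finset.sum_congr rfl hcg, ← Finset.sum_div, ← Finset.mul_sum]
  have hrow2 : blockSum κ (fun a b => v a * F a b / v b) y₂ (κ u₁)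
      = v y₂ * blockSum κ F y₂ (κ u₁) / v u₂ := by
    unfold blockSum
    have hcg : ∀ b ∈ Finset.univ.filter (fun y' => κ y' = κ u₁),
        v y₂ * F y₂ b / v b = v y₂ * F y₂ b / v u₂ := by
      intro b hb
      by_cases hbE : (y₂, b) ∈ E
      · have hb' : κ b = κ u₂ := by
          have : κ b = κ u₁ := by simpa using (Finset.mem_filter.1 hb).2
          rw [this, hκu]
        rw [vconst_on_nbhd hv H hF hL h12.symm (Ne.symm hne) hbE hu₂ hb']
      · simp [hF.1 y₂ b hbE]
    rw [Finset.sum_congr rfl hcg, ← Finset.sum_div, ← Finset.mul_sum]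
  have hs := hL (κ y₁) (κ u₁) hD y₁ y₂ rfl h12.symm
  have hspos : 0 < blockSum κ F y₁ (κ u₁) := blockSum_pos' hF hu₁
  have he := H F hF hL (κ y₁) (κ u₁) hD y₁ y₂ rfl h12.symm
  rw [hrow1, hrow2, ← hs] at he
  have h' := (div_eq_div_iff (hv u₁).ne' (hv u₂).ne').1 he
  have hkey : (v y₁ * v u₂) * blockSum κ F y₁ (κ u₁)
      = (v y₂ * v u₁) * blockSum κ F y₁ (κ u₁) := by linear_combination h'
  exact mul_right_cancel₀ hspos.ne' hkey

private lemma lumped_conn {E : Set (Y × Y)} {κ : Y → X} (hconn : StronglyConnected E)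
    (hsurj : Function.Surjective κ) : StronglyConnected (lumpedEdges E κ) := by
  intro x x'
  obtain ⟨a, rfl⟩ := hsurj x
  obtain ⟨b, rfl⟩ := hsurj x'
  exact Relation.ReflTransGen.lift (p := fun p q => (p, q) ∈ lumpedEdges E κ) κ
    (fun s t hst => ⟨(s, t), hst, rfl, rfl⟩) a b (hconn a b)

end AuxClosure

/-- the positive lumpable cone is closed under conjugation by `diag v`
if and only if `v` is constant on the partition induced by `κ`. -/
theorem closure_under_similarity_transform [Fintype Y] [Fintype X] [DecidableEq X]
    (E : Set (Y × Y)) (κ : Y → X) (hsurj : Function.Surjective κ)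
    (hconn : StronglyConnected E)
    (hne : ∃ F : Y → Y → ℝ, MemFpos E F ∧ Lumpable E κ F)
    (v : Y → ℝ) (hv : ∀ y : Y, 0 < v y) :
    (∀ F : Y → Y → ℝ, MemFpos E F → Lumpable E κ F →
        MemFpos E (fun y y' => v y * F y y' / v y') ∧
          Lumpable E κ (fun y y' => v y * F y y' / v y')) ↔
      (∀ (x : X) (y₁ y₂ : Y), κ y₁ = x → κ y₂ = x → v y₁ = v y₂) := by
  classical
  constructor
  · -- forward direction
    intro H
    intro x y₁ y₂ h1 h2
    by_contra hnev
    have Hl : ∀ F : Y → Y → ℝ, MemFpos E F → Lumpable E κ F →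
        Lumpable E κ (fun a b => v a * F a b / v b) := fun F hp hl => (H F hp hl).2
    obtain ⟨F, hFpos, hFlump⟩ := hne
    have hfibne : ∀ z : X, ((Finset.univ.filter (fun a : Y => κ a = z)).image v).Nonempty := by
      intro z
      obtain ⟨a, rfl⟩ := hsurj z
      exact ⟨v a, Finset.mem_image_of_mem v (by simp)⟩
    set M : X → ℝ := fun z => ((Finset.univ.filter (fun a : Y => κ a = z)).image v).max'
      (hfibne z) with hMdef
    set m : X → ℝ := fun z => ((Finset.univ.filter (fun a : Y => κ a = z)).image v).min'
      (hfibne z) with hmdef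
    have hle : ∀ a : Y, v a ≤ M (κ a) := fun a =>
      Finset.le_max' _ _ (Finset.mem_image_of_mem v (by simp))
    have hge : ∀ a : Y, m (κ a) ≤ v a := fun a =>
      Finset.min'_le _ _ (Finset.mem_image_of_mem v (by simp))
    have hMex : ∀ z : X, ∃ a : Y, κ a = z ∧ v a = M z := by
      intro z
      have hmem := Finset.max'_mem _ (hfibne z)
      rw [Finset.mem_image] at hmem
      obtain ⟨a, ha, hva⟩ := hmem
      exact ⟨a, by simpa using (Finset.mem_filter.1 ha).2, hva⟩
    have hmex : ∀ z : X, ∃ a : Y, κ a = z ∧ v a = m z := by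
      intro z
      have hmem := Finset.min'_mem _ (hfibne z)
      rw [Finset.mem_image] at hmem
      obtain ⟨a, ha, hva⟩ := hmem
      exact ⟨a, by simpa using (Finset.mem_filter.1 ha).2, hva⟩
    have hMpos : ∀ z : X, 0 < M z := by
      intro z; obtain ⟨a, _, ha⟩ := hMex z; rw [← ha]; exact hv a
    have hmpos : ∀ z : X, 0 < m z := by
      intro z; obtain ⟨a, _, ha⟩ := hmex z; rw [← ha]; exact hv a
    have hmM : ∀ z : X, m z ≤ M z := by
      intro z
      obtain ⟨a, haz, haM⟩ := hMex z
      rw [← haM, ← haz]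
      exact hge a
    -- step inequality along lumped edges
    have hstep : ∀ z z' : X, (z, z') ∈ lumpedEdges E κ → M z * m z' ≤ M z' * m z := by
      intro z z' hD
      obtain ⟨a, haz, haM⟩ := hMex z
      obtain ⟨b, hbz, hbm⟩ := hmex z
      by_cases hab : v a = v b
      · have hMm : M z = m z := by rw [← haM, ← hbm, hab]
        rw [hMm]
        have h1 := hmM z'
        have h2 := hmpos z
        nlinarith
      · have hne' : a ≠ b := fun h => hab (h ▸ rfl)
        obtain ⟨u₁, hu₁z, hu₁E⟩ := factA hFpos hFlump hD haz
        obtain ⟨u₂, hu₂z, hu₂E⟩ := factA hFpos hFlump hD hbz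
        have hcr := cross_rel hv Hl hFpos hFlump (haz.trans hbz.symm) hne' hu₁E hu₂E
          (hu₂z.trans hu₁z.symm)
        have hh1 : m z' ≤ v u₂ := by rw [← hu₂z]; exact hge u₂
        have hh2 : v u₁ ≤ M z' := by rw [← hu₁z]; exact hle u₁
        calc M z * m z' = v a * m z' := by rw [haM]
          _ ≤ v a * v u₂ := mul_le_mul_of_nonneg_left hh1 (hv a).le
          _ = v b * v u₁ := hcr
          _ ≤ v b * M z' := mul_le_mul_of_nonneg_left hh2 (hv b).le
          _ = M z' * m z := by rw [hbm]; ring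
    have htrans : ∀ z z' : X,
        Relation.ReflTransGen (fun p q => (p, q) ∈ lumpedEdges E κ) z z' →
        M z * m z' ≤ M z' * m z := by
      intro z z' h
      induction h with
      | refl => exact le_refl _
      | @tail c w hzc hcw ih =>
        have h2 := hstep c w hcw
        have hA := mul_le_mul_of_nonneg_right ih (hmpos w).le
        have hB := mul_le_mul_of_nonneg_right h2 (hmpos z).le
        have hkey : (M z * m w) * m c ≤ (M w * m z) * m c := by nlinarith
        exact le_of_mul_le_mul_right hkey (hmpos c)
    have hDconn := lumped_conn hconn hsurj
    have hcross_eq : ∀ z z' : X, M z * m z' = M z' * m z := by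
      intro z z'
      have h1 := htrans z z' (hDconn z z')
      have h2 := htrans z' z (hDconn z' z)
      linarith
    have hgapx : m x < M x := by
      rcases eq_or_lt_of_le (hmM x) with h | h
      · exfalso
        apply hnev
        have e1 : v y₁ ≤ M x := by rw [← h1]; exact hle y₁
        have e2 : m x ≤ v y₁ := by rw [← h1]; exact hge y₁
        have e3 : v y₂ ≤ M x := by rw [← h2]; exact hle y₂
        have e4 : m x ≤ v y₂ := by rw [← h2]; exact hge y₂
        linarith
      · exact h
    have hgap : ∀ z : X, m z < M z := by
      intro z
      have hc := hcross_eq x z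
      rcases eq_or_lt_of_le (hmM z) with h | h
      · exfalso
        rw [← h] at hc
        have : M x * m z = m x * m z := by linarith [hc]
        have := mul_right_cancel₀ (hmpos z).ne' this
        linarith
      · exact h
    have hprop : ∀ a b : Y, v a = M (κ a) → (a, b) ∈ E → v b = M (κ b) := by
      intro a b haM hab
      obtain ⟨p, hpz, hpm⟩ := hmex (κ a)
      have hap : a ≠ p := by
        intro h
        rw [← h] at hpm
        have hg := hgap (κ a)
        linarith
      obtain ⟨u₂, hu₂z, hu₂E⟩ := factA hFpos hFlump
        (⟨(a, b), hab, rfl, rfl⟩ : (κ a, κ b) ∈ lumpedEdges E κ) hpz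
      have hcr := cross_rel hv Hl hFpos hFlump hpz.symm hap hab hu₂E hu₂z
      have hh1 : m (κ b) ≤ v u₂ := by rw [← hu₂z]; exact hge u₂
      have hceq := hcross_eq (κ a) (κ b)
      have hkey : M (κ b) * m (κ a) ≤ m (κ a) * v b := by
        calc M (κ b) * m (κ a) = M (κ a) * m (κ b) := hceq.symm
          _ ≤ M (κ a) * v u₂ := mul_le_mul_of_nonneg_left hh1 (hMpos (κ a)).le
          _ = v a * v u₂ := by rw [haM]
          _ = v p * v b := hcr
          _ = m (κ a) * v b := by rw [hpm]
      have hgeb : M (κ b) ≤ v b := by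
        rw [mul_comm (m (κ a)) (v b)] at hkey
        exact le_of_mul_le_mul_right hkey (hmpos (κ a))
      exact le_antisymm (hle b) hgeb
    obtain ⟨a₀, ha₀x, ha₀M⟩ := hMex x
    obtain ⟨p₀, hp₀x, hp₀m⟩ := hmex x
    have hall : ∀ q : Y, Relation.ReflTransGen (fun s t => (s, t) ∈ E) a₀ q →
        v q = M (κ q) := by
      intro q h
      induction h with
      | refl => rw [ha₀x]; exact ha₀M
      | @tail c w _ hcw ih => exact hprop c w ih hcw
    have hfin := hall p₀ (hconn a₀ p₀)
    rw [hp₀x] at hfin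
    rw [hfin] at hp₀m
    have := hgap x
    linarith
  · -- backward direction
    intro hvc F hFpos hFlump
    constructor
    · constructor
      · intro a b hab
        simp [hFpos.1 a b hab]
      · intro a b hab
        exact div_pos (mul_pos (hv a) (hFpos.2 a b hab)) (hv b)
    · intro x x' hD a b ha hb
      obtain ⟨q, hqE, hq1, hq2⟩ := hD
      have hvab : v a = v b := hvc x a b ha hb
      have hkey : ∀ c ∈ Finset.univ.filter (fun y' => κ y' = x'), v c = v q.2 := by
        intro c hc
        exact hvc x' c q.2 (by simpa using (Finset.mem_filter.1 hc).2) hq2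
      unfold blockSum
      calc ∑ c ∈ Finset.univ.filter (fun y' => κ y' = x'), v a * F a c / v c
          = ∑ c ∈ Finset.univ.filter (fun y' => κ y' = x'), v a * F a c / v q.2 :=
            Finset.sum_congr rfl (fun c hc => by rw [hkey c hc])
        _ = v a * (∑ c ∈ Finset.univ.filter (fun y' => κ y' = x'), F a c) / v q.2 := by
            rw [← Finset.sum_div, ← Finset.mul_sum]
        _ = v b * (∑ c ∈ Finset.univ.filter (fun y' => κ y' = x'), F b c) / v q.2 := by
            have hbl := hFlump x x' ⟨q, hqE, hq1, hq2⟩ a b ha hb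
            unfold blockSum at hbl
            rw [hvab, hbl]
        _ = ∑ c ∈ Finset.univ.filter (fun y' => κ y' = x'), v b * F b c / v q.2 := by
            rw [← Finset.sum_div, ← Finset.mul_sum]
        _ = ∑ c ∈ Finset.univ.filter (fun y' => κ y' = x'), v b * F b c / v c :=
            Finset.sum_congr rfl (fun c hc => by rw [hkey c hc])
end

section
/- Let F ∈ F⁺(Y,E) and let Q be an s-normalization of F. Then Q ∈ W_κ(Y,E) if and only if there exists a positive vector w : Y → ℝ such that the conjugated matrix (y,y') ↦ w(y)·F(y,y')/w(y') belongs to F_κ⁺(Y,E). -/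
open Finset

variable {Y X : Type*}

section AuxLemmas

variable [Fintype Y] [Fintype X] [DecidableEq X]

lemma myBlockSum_eq_zero {E : Set (Y × Y)} {κ : Y → X} {G : Y → Y → ℝ}
    (hG : MemF E G) {y : Y} {x' : X} (h : (κ y, x') ∉ lumpedEdges E κ) :
    blockSum κ G y x' = 0 := by
  refine Finset.sum_eq_zero fun y' hy' => ?_
  simp only [Finset.mem_filter, Finset.mem_univ, true_and] at hy'
  by_contra hne
  have hmem : (y, y') ∈ E := by
    by_contra hE; exact hne (hG y y' hE)
  exact h ⟨(y, y'), hmem, rfl, hy'⟩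

lemma myBlockSum_congr {E : Set (Y × Y)} {κ : Y → X} {G : Y → Y → ℝ}
    (hG : MemF E G) (hL : Lumpable E κ G) {y₁ y₂ : Y} (hκ : κ y₁ = κ y₂) (x' : X) :
    blockSum κ G y₁ x' = blockSum κ G y₂ x' := by
  by_cases hD : (κ y₁, x') ∈ lumpedEdges E κ
  · exact hL (κ y₁) x' hD y₁ y₂ rfl hκ.symm
  · rw [myBlockSum_eq_zero hG hD, myBlockSum_eq_zero hG (hκ ▸ hD)]

lemma mySum_fiber {κ : Y → X} (G : Y → Y → ℝ) (f : X → ℝ) (y : Y) :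
    ∑ y', G y y' * f (κ y') = ∑ x', blockSum κ G y x' * f x' := by
  rw [← Finset.sum_fiberwise Finset.univ κ (fun y' => G y y' * f (κ y'))]
  refine Finset.sum_congr rfl fun x' _ => ?_
  rw [blockSum, Finset.sum_mul]
  refine Finset.sum_congr rfl fun y' hy' => ?_
  simp only [Finset.mem_filter] at hy'
  rw [hy'.2]

/-- A positive right eigenvector of a lumpable irreducible matrix is constant on fibers. -/
lemma eigvec_const_on_fibers {E : Set (Y × Y)} {κ : Y → X}
    (hconn : StronglyConnected E) {G : Y → Y → ℝ} (hG : MemFpos E G)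
    (hL : Lumpable E κ G) {u : Y → ℝ} (hu : ∀ y, 0 < u y) {ρ : ℝ} (hρ : 0 < ρ)
    (heig : ∀ y, ∑ y', G y y' * u y' = ρ * u y) :
    ∀ y₁ y₂ : Y, κ y₁ = κ y₂ → u y₁ = u y₂ := by
  intro yA yB hAB
  haveI : Nonempty Y := ⟨yA⟩
  have hGnn : ∀ y y', 0 ≤ G y y' := by
    intro y y'
    by_cases h : (y, y') ∈ E
    · exact (hG.2 y y' h).le
    · rw [hG.1 y y' h]
  have hfibne : ∀ y : Y, (Finset.univ.filter fun z => κ z = κ y).Nonempty :=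
    fun y => ⟨y, by simp⟩
  set bX : X → ℝ := fun x =>
    if h : (Finset.univ.filter fun z => κ z = x).Nonempty then
      (Finset.univ.filter fun z => κ z = x).sup' h u else 0 with hbX
  set b : Y → ℝ := fun y => bX (κ y) with hbdef
  have hbval : ∀ y : Y, b y = (Finset.univ.filter fun z => κ z = κ y).sup' (hfibne y) u := by
    intro y; simp only [hbdef, hbX, dif_pos (hfibne y)]
  have hub : ∀ y, u y ≤ b y := by
    intro y; rw [hbval]; exact Finset.le_sup' u (by simp)
  have hbconst : ∀ y y' : Y, κ y = κ y' → b y = b y' := by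
    intro y y' h; simp only [hbdef, h]
  have hbmem : ∀ y : Y, ∃ w : Y, κ w = κ y ∧ b y = u w := by
    intro y
    obtain ⟨w, hw, hw2⟩ := Finset.exists_mem_eq_sup' (hfibne y) u
    simp only [Finset.mem_filter, Finset.mem_univ, true_and] at hw
    exact ⟨w, hw, by rw [hbval]; exact hw2⟩
  have hrow : ∀ (f : X → ℝ) (y y' : Y), κ y = κ y' →
      ∑ z, G y z * f (κ z) = ∑ z, G y' z * f (κ z) := by
    intro f y y' h
    rw [mySum_fiber, mySum_fiber]
    refine Finset.sum_congr rfl fun x' _ => ?_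
    rw [myBlockSum_congr hG.1 hL h]
  have hGb : ∀ y, ρ * b y ≤ ∑ z, G y z * b z := by
    intro y
    obtain ⟨w, hw, hwu⟩ := hbmem y
    have h1 : ∑ z, G y z * b z = ∑ z, G w z * b z := hrow bX y w hw.symm
    have h2 : ∑ z, G w z * u z ≤ ∑ z, G w z * b z :=
      Finset.sum_le_sum fun z _ => mul_le_mul_of_nonneg_left (hub z) (hGnn w z)
    calc ρ * b y = ρ * u w := by rw [hwu]
      _ = ∑ z, G w z * u z := (heig w).symm
      _ ≤ ∑ z, G w z * b z := h2
      _ = ∑ z, G y z * b z := h1.symm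
  obtain ⟨y₀, -, hy₀⟩ := Finset.exists_mem_eq_sup'
    (Finset.univ_nonempty (α := Y)) fun y => b y / u y
  set s : ℝ := Finset.univ.sup' Finset.univ_nonempty fun y => b y / u y with hs
  have hsle : ∀ y, b y ≤ s * u y := by
    intro y
    have h1 : b y / u y ≤ s := Finset.le_sup' (fun y => b y / u y) (Finset.mem_univ y)
    rw [div_le_iff₀ (hu y)] at h1
    linarith [h1]
  have hspos : 0 < s := by
    rw [hy₀]
    exact div_pos (lt_of_lt_of_le (hu y₀) (hub y₀)) (hu y₀)
  set z : Y → ℝ := fun y => s * u y - b y with hz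
  have hznn : ∀ y, 0 ≤ z y := fun y => sub_nonneg.mpr (hsle y)
  have hzy₀ : z y₀ = 0 := by
    have h1 : s * u y₀ = b y₀ := by
      rw [hy₀]; exact div_mul_cancel₀ _ (hu y₀).ne'
    simp only [hz, h1, sub_self]
  have hsub : ∀ y, ∑ z', G y z' * z z' ≤ ρ * z y := by
    intro y
    have h1 : ∑ z', G y z' * z z' = s * (ρ * u y) - ∑ z', G y z' * b z' := by
      calc ∑ z', G y z' * z z'
          = ∑ z', (s * (G y z' * u z') - G y z' * b z') :=
            Finset.sum_congr rfl fun z' _ => by simp only [hz]; ring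
        _ = s * ∑ z', G y z' * u z' - ∑ z', G y z' * b z' := by
            rw [Finset.sum_sub_distrib, Finset.mul_sum]
        _ = s * (ρ * u y) - ∑ z', G y z' * b z' := by rw [heig y]
    have h2 := hGb y
    have h3 : ρ * z y = s * (ρ * u y) - ρ * b y := by simp only [hz]; ring
    linarith
  have hclosed : ∀ y y' : Y, z y = 0 → (y, y') ∈ E → z y' = 0 := by
    intro y y' hzy hE
    have h1 : ∑ z', G y z' * z z' ≤ 0 := by
      have := hsub y; rw [hzy, mul_zero] at this; exact this
    have hnn : ∀ i ∈ Finset.univ, 0 ≤ G y i * z i :=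
      fun i _ => mul_nonneg (hGnn y i) (hznn i)
    have h2 : ∑ z', G y z' * z z' = 0 := le_antisymm h1 (Finset.sum_nonneg hnn)
    have h3 := (Finset.sum_eq_zero_iff_of_nonneg hnn).mp h2 y' (Finset.mem_univ y')
    exact (mul_eq_zero.mp h3).resolve_left (ne_of_gt (hG.2 y y' hE))
  have hall : ∀ y, z y = 0 := by
    intro y
    have h := hconn y₀ y
    induction h with
    | refl => exact hzy₀
    | tail _ hE ih => exact hclosed _ _ ih hE
  have hbu : ∀ y, b y = s * u y := by
    intro y
    have := hall y
    simp only [hz] at this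
    linarith
  have hfin : s * u yA = s * u yB := by
    rw [← hbu yA, ← hbu yB]
    exact hbconst yA yB hAB
  exact mul_left_cancel₀ (ne_of_gt hspos) hfin

end AuxLemmas

/-- for `F ∈ F⁺(Y,E)` and `Q` an s-normalization of `F`, one has
`Q ∈ W_κ(Y,E)` if and only if some positive diagonal conjugation of `F` is in
`F_κ⁺(Y,E)`. -/
theorem sNorm_lumpable_iff_conjugate_lumpable [Fintype Y] [Fintype X] [DecidableEq X]
    (E : Set (Y × Y)) (κ : Y → X) (hsurj : Function.Surjective κ)
    (hconn : StronglyConnected E)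
    (F : Y → Y → ℝ) (hF : MemFpos E F)
    (Q : Y → Y → ℝ) (hQ : IsSNorm F Q) :
    (MemW E Q ∧ Lumpable E κ Q) ↔
      ∃ w : Y → ℝ, (∀ y : Y, 0 < w y) ∧
        MemFpos E (fun y y' => w y * F y y' / w y') ∧
        Lumpable E κ (fun y y' => w y * F y y' / w y') := by
  obtain ⟨ρ, v, hρ, hv, hQdef, hQrow⟩ := hQ
  constructor
  · rintro ⟨hW, hL⟩
    refine ⟨fun y => (v y)⁻¹, fun y => inv_pos.mpr (hv y), ?_, ?_⟩
    · constructor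
      · intro y y' h
        simp [hF.1 y y' h]
      · intro y y' h
        have hconj : (v y)⁻¹ * F y y' / (v y')⁻¹ = ρ * Q y y' := by
          rw [hQdef y y']
          have h1 := (hv y).ne'
          have h2 := (hv y').ne'
          field_simp
        simp only [hconj]
        exact mul_pos hρ (hW.1.2 y y' h)
    · intro x x' hD y₁ y₂ h1 h2
      have key : ∀ y : Y, blockSum κ (fun a b => (fun y => (v y)⁻¹) a * F a b / (fun y => (v y)⁻¹) b) y x'
          = ρ * blockSum κ Q y x' := by
        intro y
        rw [blockSum, blockSum, Finset.mul_sum]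
        refine Finset.sum_congr rfl fun y' _ => ?_
        simp only
        rw [hQdef y y']
        have hb1 := (hv y).ne'
        have hb2 := (hv y').ne'
        field_simp
      rw [key y₁, key y₂, hL x x' hD y₁ y₂ h1 h2]
  · rintro ⟨w, hw, hGpos, hGL⟩
    set G : Y → Y → ℝ := fun y y' => w y * F y y' / w y' with hGdef
    set u : Y → ℝ := fun y => w y * v y with hudef
    have hupos : ∀ y, 0 < u y := fun y => mul_pos (hw y) (hv y)
    have hGu : ∀ y y', G y y' * u y' = ρ * u y * Q y y' := by
      intro y y'
      rw [hQdef y y']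
      simp only [hGdef, hudef]
      have h1 := (hw y).ne'
      have h2 := (hw y').ne'
      have h3 := (hv y).ne'
      field_simp
    have heig : ∀ y, ∑ y', G y y' * u y' = ρ * u y := by
      intro y
      calc ∑ y', G y y' * u y' = ∑ y', ρ * u y * Q y y' :=
            Finset.sum_congr rfl fun y' _ => hGu y y'
        _ = ρ * u y * ∑ y', Q y y' := by rw [Finset.mul_sum]
        _ = ρ * u y := by rw [hQrow y, mul_one]
    have huconst := eigvec_const_on_fibers hconn hGpos hGL hupos hρ heig
    have hQG : ∀ y y', Q y y' = G y y' * u y' / (ρ * u y) := by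
      intro y y'
      rw [hGu y y']
      have h1 := hρ.ne'
      have h2 := (hupos y).ne'
      field_simp
    refine ⟨⟨⟨?_, ?_⟩, hQrow⟩, ?_⟩
    · intro y y' h
      rw [hQdef y y', hF.1 y y' h]
      simp
    · intro y y' h
      rw [hQdef y y']
      exact div_pos (mul_pos (hF.2 y y' h) (hv y')) (mul_pos hρ (hv y))
    · intro x x' hD y₁ y₂ h1 h2
      obtain ⟨y₀', hy₀'⟩ := hsurj x'
      have key : ∀ y : Y, blockSum κ Q y x' = blockSum κ G y x' * u y₀' / (ρ * u y) := by
        intro y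
        rw [blockSum, blockSum]
        calc ∑ y' ∈ Finset.univ.filter (fun y' => κ y' = x'), Q y y'
            = ∑ y' ∈ Finset.univ.filter (fun y' => κ y' = x'),
                G y y' * u y₀' / (ρ * u y) := by
              refine Finset.sum_congr rfl fun y' hy' => ?_
              simp only [Finset.mem_filter, Finset.mem_univ, true_and] at hy'
              rw [hQG y y', huconst y' y₀' (by rw [hy', hy₀'])]
          _ = (∑ y' ∈ Finset.univ.filter (fun y' => κ y' = x'), G y y') * u y₀' / (ρ * u y) := by
              rw [← Finset.sum_div, ← Finset.sum_mul]
      rw [key y₁, key y₂, hGL x x' hD y₁ y₂ h1 h2,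
        huconst y₁ y₂ (by rw [h1, h2])]
end

section
/- Assume W_κ(Y,E) is nonempty. If (Y,E) has a multi-row merging block with respect to κ, then there exist row-stochastic κ-lumpable matrices P₀, P₁ ∈ W_κ(Y,E) such that the Hadamard geometric midpoint P₀^{⊙1/2} ⊙ P₁^{⊙1/2} is not κ-lumpable, i.e. P₀^{⊙1/2} ⊙ P₁^{⊙1/2} ∉ F_κ⁺(Y,E). -/
open Finset

variable {Y X : Type*}

open Real in
private lemma geom_lt_arith_half {u w : ℝ} (hu : 0 < u) (hw : 0 < w) (hne : u ≠ w) :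
    u ^ ((1:ℝ)/2) * w ^ ((1:ℝ)/2) < (u + w) / 2 := by
  rw [← Real.sqrt_eq_rpow, ← Real.sqrt_eq_rpow]
  have h1 : Real.sqrt u ≠ Real.sqrt w := fun h =>
    hne (by rw [← Real.sq_sqrt hu.le, ← Real.sq_sqrt hw.le, h])
  have hd : 0 < (Real.sqrt u - Real.sqrt w) ^ 2 := by
    have := sub_ne_zero.mpr h1
    positivity
  nlinarith [Real.sq_sqrt hu.le, Real.sq_sqrt hw.le]

/-- if `(Y,E)` has a multi-row merging block with respect to `κ`, then some
Hadamard geometric midpoint of two matrices of `W_κ(Y,E)` fails to be `κ`-lumpable. -/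
theorem multiRow_mergingBlock_breaks_log_affinity [Fintype Y] [Fintype X] [DecidableEq X]
    (E : Set (Y × Y)) (κ : Y → X) (hsurj : Function.Surjective κ)
    (hconn : StronglyConnected E)
    (hne : (Wkappa E κ).Nonempty)
    (hmb : ∃ x x' : X, MultiRowMergingBlock E κ x x') :
    ∃ P₀ P₁ : Y → Y → ℝ, P₀ ∈ Wkappa E κ ∧ P₁ ∈ Wkappa E κ ∧
      ¬ (MemFpos E (hadGeom E P₀ P₁ (1 / 2)) ∧
          Lumpable E κ (hadGeom E P₀ P₁ (1 / 2))) := by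
  classical
  obtain ⟨P, ⟨⟨⟨hPF, hPpos⟩, hPrs⟩, hPlump⟩⟩ := hne
  obtain ⟨x, x', ⟨⟨w, y₁', y₂', hκw, hκ1, hκ2, hne12, he1, he2⟩, u, v, huv, hκu, hκv⟩⟩ := hmb
  obtain ⟨z, hzne, hκz⟩ : ∃ z, z ≠ w ∧ κ z = x := by
    by_cases h : u = w
    · exact ⟨v, fun hv => huv (h.trans hv.symm), hκv⟩
    · exact ⟨u, h, hκu⟩
  set a := P w y₁' with ha
  set b := P w y₂' with hb
  have hapos : 0 < a := hPpos _ _ he1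
  have hbpos : 0 < b := hPpos _ _ he2
  set P₁ : Y → Y → ℝ := fun y y' =>
    P y y' + (if y = w ∧ y' = y₁' then b/2 else 0) - (if y = w ∧ y' = y₂' then b/2 else 0)
    with hP₁
  have hP₁ne : ∀ y y', ¬(y = w ∧ y' = y₁') → ¬(y = w ∧ y' = y₂') → P₁ y y' = P y y' := by
    intro y y' h1 h2; simp [hP₁, h1, h2]
  have hP₁a : P₁ w y₁' = a + b/2 := by
    simp [hP₁, hne12, ha]
  have hP₁b : P₁ w y₂' = b/2 := by
    have : ¬ (y₂' = y₁') := fun h => hne12 h.symm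
    simp [hP₁, this, hb]
    ring
  -- key summation lemma
  have key : ∀ (s : Finset Y) (y t : Y) (c : ℝ),
      (∑ y' ∈ s, if y = w ∧ y' = t then c else 0)
      = if t ∈ s ∧ y = w then c else 0 := by
    intro s y t c
    rw [Finset.sum_congr rfl (fun y' _ => show (if y = w ∧ y' = t then c else 0)
        = if y' = t then (if y = w then c else 0) else 0 by
      by_cases h1 : y = w <;> by_cases h2 : y' = t <;> simp [h1, h2])]
    rw [Finset.sum_ite_eq']
    by_cases h1 : t ∈ s <;> by_cases h2 : y = w <;> simp [h1, h2]
  -- P₁ is in Wkappa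
  have hP₁F : MemF E P₁ := by
    intro y y' hE
    have h1 : ¬(y = w ∧ y' = y₁') := by rintro ⟨rfl, rfl⟩; exact hE he1
    have h2 : ¬(y = w ∧ y' = y₂') := by rintro ⟨rfl, rfl⟩; exact hE he2
    rw [hP₁ne _ _ h1 h2]; exact hPF _ _ hE
  have hP₁pos : ∀ y y', (y, y') ∈ E → 0 < P₁ y y' := by
    intro y y' hE
    by_cases h1 : y = w ∧ y' = y₁'
    · obtain ⟨rfl, rfl⟩ := h1; rw [hP₁a]; linarith
    · by_cases h2 : y = w ∧ y' = y₂'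
      · obtain ⟨rfl, rfl⟩ := h2; rw [hP₁b]; linarith
      · rw [hP₁ne _ _ h1 h2]; exact hPpos _ _ hE
  have hP₁rs : RowStochastic P₁ := by
    intro y
    simp only [hP₁]
    rw [Finset.sum_sub_distrib, Finset.sum_add_distrib, key, key]
    simp [hPrs y]
  have hP₁bs : ∀ y x'', blockSum κ P₁ y x'' = blockSum κ P y x'' := by
    intro y x''
    unfold blockSum
    simp only [hP₁]
    rw [Finset.sum_sub_distrib, Finset.sum_add_distrib, key, key]
    simp only [Finset.mem_filter, Finset.mem_univ, true_and, hκ1, hκ2]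
    ring
  have hP₁lump : Lumpable E κ P₁ := by
    intro x₀ x₀' hd y₁ y₂ h1 h2
    rw [hP₁bs, hP₁bs]
    exact hPlump _ _ hd _ _ h1 h2
  -- properties of the midpoint Q
  set Q : Y → Y → ℝ := hadGeom E P P₁ (1/2) with hQ
  have hQedge : ∀ y y', (y, y') ∈ E →
      Q y y' = (P y y') ^ ((1:ℝ)/2) * (P₁ y y') ^ ((1:ℝ)/2) := by
    intro y y' hE
    rw [hQ]
    unfold hadGeom
    rw [Set.indicator_of_mem hE]
    norm_num
  have hQeqP : ∀ y y', ¬(y = w ∧ y' = y₁') → ¬(y = w ∧ y' = y₂') → Q y y' = P y y' := by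
    intro y y' h1 h2
    by_cases hE : (y, y') ∈ E
    · rw [hQedge _ _ hE, hP₁ne _ _ h1 h2, ← Real.rpow_add (hPpos _ _ hE)]
      norm_num
    · simp [hQ, hadGeom, Set.indicator_of_notMem hE, hPF _ _ hE]
  -- the strict inequality at row w
  set s : Finset Y := Finset.univ.filter (fun y' => κ y' = x') with hs
  have hy1s : y₁' ∈ s := by simp [hs, hκ1]
  have hy2s : y₂' ∈ s.erase y₁' := by
    simp [hs, hκ2, Finset.mem_erase]
    exact fun h => hne12 h.symm
  have hsplit : ∀ f : Y → ℝ, ∑ y' ∈ s, f y' =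
      f y₁' + (f y₂' + ∑ y' ∈ (s.erase y₁').erase y₂', f y') := by
    intro f
    rw [← Finset.add_sum_erase _ f hy1s, ← Finset.add_sum_erase _ f hy2s]
  have htail : ∑ y' ∈ (s.erase y₁').erase y₂', Q w y' =
      ∑ y' ∈ (s.erase y₁').erase y₂', P w y' := by
    refine Finset.sum_congr rfl (fun y' hy' => ?_)
    have h2 : y' ≠ y₂' := (Finset.mem_erase.mp hy').1
    have h1 : y' ≠ y₁' := (Finset.mem_erase.mp (Finset.mem_erase.mp hy').2).1
    exact hQeqP _ _ (fun h => h1 h.2) (fun h => h2 h.2)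
  have hQ1 : Q w y₁' < (a + (a + b/2)) / 2 := by
    rw [hQedge _ _ he1, hP₁a, ← ha]
    exact geom_lt_arith_half hapos (by linarith) (by linarith)
  have hQ2 : Q w y₂' < (b + b/2) / 2 := by
    rw [hQedge _ _ he2, hP₁b, ← hb]
    exact geom_lt_arith_half hbpos (by linarith) (by linarith)
  have hlt : blockSum κ Q w x' < blockSum κ P w x' := by
    show ∑ y' ∈ s, Q w y' < ∑ y' ∈ s, P w y'
    rw [hsplit (Q w), hsplit (P w), htail, ← ha, ← hb]
    linarith
  have hzQ : blockSum κ Q z x' = blockSum κ P z x' := by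
    refine Finset.sum_congr rfl (fun y' _ => ?_)
    exact hQeqP _ _ (fun h => hzne h.1) (fun h => hzne h.1)
  -- conclude
  refine ⟨P, P₁, ⟨⟨⟨hPF, hPpos⟩, hPrs⟩, hPlump⟩,
    ⟨⟨⟨hP₁F, hP₁pos⟩, hP₁rs⟩, hP₁lump⟩, ?_⟩
  rintro ⟨-, hlump⟩
  have hd : (x, x') ∈ lumpedEdges E κ := ⟨(w, y₁'), he1, hκw, hκ1⟩
  have h₁ := hlump x x' hd w z hκw hκz
  have h₂ := hPlump x x' hd w z hκw hκz
  rw [← hQ] at h₁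
  rw [hzQ, ← h₂] at h₁
  linarith
end

section
/- Assume W_κ(Y,E) is nonempty and that the following lazy-cycle condition holds: (a) for every (y,y') ∈ E with κ(y) = κ(y') one has y = y', and (b) the directed graph on X with edge set C = {(κ(y),κ(y')) : (y,y') ∈ E, κ(y) ≠ κ(y')} is a single directed cycle visiting every element of X (every x ∈ X has exactly one outgoing and exactly one incoming edge in C, and (X,C) is strongly connected). Then W_κ(Y,E) is e-geodesically closed, i.e., W_κ(Y,E) forms an e-family of stochastic matrices (regardless of whether its off-diagonal blocks are multi-row merging). -/
open Finset

variable {Y X : Type*}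

/-- The edge set `C = {(κ y, κ y') : (y,y') ∈ E, κ y ≠ κ y'}` of the lumped graph with
loops removed. -/
def cycleEdges (E : Set (Y × Y)) (κ : Y → X) : Set (X × X) :=
  {p | (∃ q ∈ E, κ q.1 = p.1 ∧ κ q.2 = p.2) ∧ p.1 ≠ p.2}


private lemma blockSum_diag_aux [Fintype Y] [DecidableEq X] {E : Set (Y × Y)} {κ : Y → X}
    (hdiag : ∀ y y' : Y, (y, y') ∈ E → κ y = κ y' → y = y')
    {F : Y → Y → ℝ} (hF : MemF E F) (y : Y) :
    blockSum κ F y (κ y) = F y y := by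
  unfold blockSum
  apply Finset.sum_eq_single_of_mem
  · simp
  · intro y' hy' hne
    by_cases h : (y, y') ∈ E
    · exact absurd ((hdiag y y' h (Finset.mem_filter.mp hy').2.symm).symm) hne
    · exact hF y y' h

/-- lazy cycle criterion: if within-block edges are loops only and the
lumped off-diagonal graph is a single directed cycle covering `X`, then `W_κ(Y,E)` is
e-geodesically closed, i.e. forms an e-family. -/
theorem lazy_cycle_criterion [Fintype Y] [Fintype X] [DecidableEq X]
    (E : Set (Y × Y)) (κ : Y → X) (hsurj : Function.Surjective κ)
    (hconn : StronglyConnected E)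
    (hne : (Wkappa E κ).Nonempty)
    (hdiag : ∀ y y' : Y, (y, y') ∈ E → κ y = κ y' → y = y')
    (hout : ∀ x : X, ∃! x' : X, (x, x') ∈ cycleEdges E κ)
    (hin : ∀ x' : X, ∃! x : X, (x, x') ∈ cycleEdges E κ)
    (hcyc : StronglyConnected (cycleEdges E κ)) :
    EGeodClosed E (Wkappa E κ) := by
  intro P₀ hP₀ P₁ hP₁ t Q hQ
  obtain ⟨ρ, v, hρ, hv, hQdef, hQrow⟩ := hQ
  obtain ⟨⟨⟨hP₀mem, hP₀pos⟩, hP₀row⟩, hP₀lum⟩ := hP₀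
  obtain ⟨⟨⟨hP₁mem, hP₁pos⟩, hP₁row⟩, hP₁lum⟩ := hP₁
  have hQ0 : MemF E Q := by
    intro y y' h
    rw [hQdef]
    unfold hadGeom
    rw [Set.indicator_of_notMem h]
    ring
  have hQpos : ∀ y y', (y, y') ∈ E → 0 < Q y y' := by
    intro y y' h
    rw [hQdef]
    unfold hadGeom
    rw [Set.indicator_of_mem h]
    have h0 := hP₀pos y y' h
    have h1 := hP₁pos y y' h
    have hvy := hv y
    have hvy' := hv y'
    positivity
  -- diagonal blocks of Q are constant within each class
  have key : ∀ x : X, ∀ y₁ y₂ : Y, κ y₁ = x → κ y₂ = x →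
      blockSum κ Q y₁ x = blockSum κ Q y₂ x := by
    intro x y₁ y₂ h1 h2
    have d1 : blockSum κ Q y₁ x = Q y₁ y₁ := by
      have := blockSum_diag_aux hdiag hQ0 y₁; rwa [h1] at this
    have d2 : blockSum κ Q y₂ x = Q y₂ y₂ := by
      have := blockSum_diag_aux hdiag hQ0 y₂; rwa [h2] at this
    rw [d1, d2]
    by_cases hxx : (x, x) ∈ lumpedEdges E κ
    · -- all elements of the class carry a loop
      have loop : ∀ y : Y, κ y = x → (y, y) ∈ E := by
        intro y hy
        obtain ⟨q, hqE, hq1, hq2⟩ := hxx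
        have hq : q.1 = q.2 := hdiag q.1 q.2 hqE (hq1.trans hq2.symm)
        have h3 : blockSum κ P₀ y x = blockSum κ P₀ q.1 x :=
          hP₀lum x x ⟨q, hqE, hq1, hq2⟩ y q.1 hy hq1
        have h4 : blockSum κ P₀ q.1 x = P₀ q.1 q.1 := by
          have := blockSum_diag_aux hdiag hP₀mem q.1; rwa [hq1] at this
        have h5 : 0 < P₀ q.1 q.1 := by
          have := hP₀pos q.1 q.2 hqE; rwa [← hq] at this
        have h6 : blockSum κ P₀ y x = P₀ y y := by
          have := blockSum_diag_aux hdiag hP₀mem y; rwa [hy] at this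
        by_contra hc
        have : P₀ y y = 0 := hP₀mem y y hc
        rw [this] at h6
        rw [h6, h4] at h3
        exact absurd h3.symm (ne_of_gt h5)
      have qdiag : ∀ y : Y, κ y = x →
          Q y y = P₀ y y ^ (1 - t) * P₁ y y ^ t / ρ := by
        intro y hy
        rw [hQdef]
        unfold hadGeom
        rw [Set.indicator_of_mem (loop y hy)]
        have hvy := (hv y).ne'
        field_simp
      have p0 : P₀ y₁ y₁ = P₀ y₂ y₂ := by
        have e1 : blockSum κ P₀ y₁ x = P₀ y₁ y₁ := by
          have := blockSum_diag_aux hdiag hP₀mem y₁; rwa [h1] at this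
        have e2 : blockSum κ P₀ y₂ x = P₀ y₂ y₂ := by
          have := blockSum_diag_aux hdiag hP₀mem y₂; rwa [h2] at this
        rw [← e1, ← e2]; exact hP₀lum x x hxx y₁ y₂ h1 h2
      have p1 : P₁ y₁ y₁ = P₁ y₂ y₂ := by
        have e1 : blockSum κ P₁ y₁ x = P₁ y₁ y₁ := by
          have := blockSum_diag_aux hdiag hP₁mem y₁; rwa [h1] at this
        have e2 : blockSum κ P₁ y₂ x = P₁ y₂ y₂ := by
          have := blockSum_diag_aux hdiag hP₁mem y₂; rwa [h2] at this
        rw [← e1, ← e2]; exact hP₁lum x x hxx y₁ y₂ h1 h2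
      rw [qdiag y₁ h1, qdiag y₂ h2, p0, p1]
    · -- no loops in the class : both diagonal entries vanish
      have noloop : ∀ y : Y, κ y = x → Q y y = 0 := by
        intro y hy
        apply hQ0
        intro hE
        exact hxx ⟨(y, y), hE, hy, hy⟩
      rw [noloop y₁ h1, noloop y₂ h2]
  -- off-diagonal block sums are complementary to diagonal ones
  have split : ∀ x x' : X, x ≠ x' → (x, x') ∈ lumpedEdges E κ → ∀ y : Y, κ y = x →
      blockSum κ Q y x + blockSum κ Q y x' = 1 := by
    intro x x' hnex hxx' y hy
    have hcE : (x, x') ∈ cycleEdges E κ := ⟨hxx', hnex⟩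
    have hedge : ∀ y'' : Y, (y, y'') ∈ E → κ y'' = x ∨ κ y'' = x' := by
      intro y'' h
      by_cases hc : κ y'' = x
      · exact Or.inl hc
      · refine Or.inr ((hout x).unique ?_ hcE)
        exact ⟨⟨(y, y''), h, hy, rfl⟩, fun he => hc he.symm⟩
    have hrow := hQrow y
    rw [← hrow]
    unfold blockSum
    rw [← Finset.sum_filter_add_sum_filter_not Finset.univ (fun y' => κ y' = x)
      (fun y' => Q y y')]
    congr 1
    apply Finset.sum_subset
    · intro a ha
      simp only [Finset.mem_filter, Finset.mem_univ, true_and] at ha ⊢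
      rw [ha]; exact fun h => hnex h.symm
    · intro a ha hna
      simp only [Finset.mem_filter, Finset.mem_univ, true_and] at ha hna
      apply hQ0
      intro hE
      rcases hedge a hE with h | h
      · exact ha h
      · exact hna h
  refine ⟨⟨⟨hQ0, hQpos⟩, hQrow⟩, ?_⟩
  intro x x' hxx' y₁ y₂ h1 h2
  by_cases hxe : x' = x
  · subst hxe
    exact key x' y₁ y₂ h1 h2
  · have hnex : x ≠ x' := fun h => hxe h.symm
    have e1 := split x x' hnex hxx' y₁ h1
    have e2 := split x x' hnex hxx' y₂ h2
    have e3 := key x y₁ y₂ h1 h2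
    linarith
end

section
/- Let E = Y × Y be the complete edge set and suppose κ is non-degenerate, i.e. 1 < |X| < |Y|. Then W_κ(Y, Y×Y) is not e-geodesically closed: there exist P₀, P₁ ∈ W_κ(Y, Y×Y), t ∈ ℝ, and an s-normalization Q of P₀^{⊙(1−t)} ⊙ P₁^{⊙t} with Q ∉ W_κ(Y, Y×Y); hence the set of κ-lumpable everywhere-positive stochastic matrices does not form an e-family. -/
open Finset

variable {Y X : Type*}

private lemma if_decomp {Y : Type*} [DecidableEq Y] {a b : Y} (hab : a ≠ b) (p q e : ℝ)
    (y' : Y) :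
    (if y' = a then p else if y' = b then q else e) =
      (if y' = a then p - e else 0) + (if y' = b then q - e else 0) + e := by
  rcases eq_or_ne y' a with h | h
  · subst h
    rw [if_pos rfl, if_pos rfl, if_neg hab]; ring
  · rw [if_neg h, if_neg h]
    rcases eq_or_ne y' b with h2 | h2
    · subst h2; rw [if_pos rfl, if_pos rfl]; ring
    · rw [if_neg h2, if_neg h2]; ring

private lemma sum_row_ite {Y : Type*} [DecidableEq Y] {a b : Y} (hab : a ≠ b) (p q e : ℝ)
    (s : Finset Y) :
    ∑ y' ∈ s, (if y' = a then p else if y' = b then q else e) =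
      (if a ∈ s then p - e else 0) + (if b ∈ s then q - e else 0) + s.card * e := by
  simp_rw [if_decomp hab p q e]
  rw [Finset.sum_add_distrib, Finset.sum_add_distrib,
    Finset.sum_ite_eq' s a fun _ => p - e, Finset.sum_ite_eq' s b fun _ => q - e,
    Finset.sum_const, nsmul_eq_mul]

/-- complete graph: for a non-degenerate lumping map `κ`
(`1 < |X| < |Y|`), the family `W_κ(Y, Y×Y)` is not e-geodesically closed, hence the
κ-lumpable everywhere-positive stochastic matrices do not form an e-family. -/
theorem complete_graph_not_eFamily [Fintype Y] [Fintype X] [DecidableEq X]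
    (κ : Y → X) (hsurj : Function.Surjective κ)
    (hX : 1 < Fintype.card X) (hXY : Fintype.card X < Fintype.card Y) :
    ∃ P₀ P₁ : Y → Y → ℝ,
      P₀ ∈ Wkappa (Set.univ : Set (Y × Y)) κ ∧ P₁ ∈ Wkappa (Set.univ : Set (Y × Y)) κ ∧
      ∃ (t : ℝ) (Q : Y → Y → ℝ),
        IsSNorm (hadGeom (Set.univ : Set (Y × Y)) P₀ P₁ t) Q ∧
        Q ∉ Wkappa (Set.univ : Set (Y × Y)) κ := by
  classical
  obtain ⟨a, b, hab, hk⟩ := Fintype.exists_ne_map_eq_of_card_lt κ hXY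
  obtain ⟨x', hx'⟩ := Fintype.exists_ne_of_one_lt_card hX (κ a)
  obtain ⟨c, hc⟩ := hsurj x'
  have hca : κ c ≠ κ a := by rw [hc]; exact hx'
  have hn3 : 3 ≤ Fintype.card Y := by
    have h2 : 2 ≤ Fintype.card X := hX
    omega
  set N : ℝ := (Fintype.card Y : ℝ) with hNdef
  have hN3 : (3 : ℝ) ≤ N := by rw [hNdef]; exact_mod_cast hn3
  have hN2 : (0 : ℝ) < N - 2 := by linarith
  set d : ℝ := 1 / (2 * (N - 2)) with hddef
  have hd : 0 < d := by rw [hddef]; positivity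
  have hmd : (N - 2) * d = 1 / 2 := by
    rw [hddef]; field_simp
  -- the key row-sum computation over all of `Y`
  have hsum : ∀ p q e : ℝ,
      ∑ y' : Y, (if y' = a then p else if y' = b then q else e) = p + q + (N - 2) * e := by
    intro p q e
    rw [sum_row_ite hab, if_pos (Finset.mem_univ a), if_pos (Finset.mem_univ b),
      Finset.card_univ]
    rw [← hNdef]; ring
  -- membership in `Wkappa` for matrices of our special shape
  have hW : ∀ p q p' q' : ℝ, 0 < p → 0 < q → 0 < p' → 0 < q' →
      p + q = 1 / 2 → p' + q' = 1 / 2 →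
      (fun y y' : Y => if y' = a then (if y = a then p else p')
        else if y' = b then (if y = a then q else q') else d) ∈
        Wkappa (Set.univ : Set (Y × Y)) κ := by
    intro p q p' q' hp hq hp' hq' hpq hpq'
    refine ⟨⟨⟨fun y y' h => absurd (Set.mem_univ _) h, fun y y' _ => ?_⟩, fun y => ?_⟩, ?_⟩
    · dsimp only; split_ifs <;> first | assumption | exact hd
    · dsimp only
      rw [hsum (if y = a then p else p') (if y = a then q else q') d]
      rcases eq_or_ne y a with h | h
      · rw [if_pos h, if_pos h]; linarith
      · rw [if_neg h, if_neg h]; linarith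
    · intro x x'' _ y₁ y₂ h1 h2
      have key : ∀ y : Y, blockSum κ
          (fun y y' : Y => if y' = a then (if y = a then p else p')
            else if y' = b then (if y = a then q else q') else d) y x'' =
          (if κ a = x'' then 1 / 2 - 2 * d else 0) +
            (Finset.univ.filter fun y' => κ y' = x'').card * d := by
        intro y
        unfold blockSum
        rw [sum_row_ite hab]
        simp only [Finset.mem_filter, Finset.mem_univ, true_and]
        rw [← hk]
        rcases eq_or_ne (κ a) x'' with h | h
        · rw [if_pos h, if_pos h, if_pos h]
          rcases eq_or_ne y a with hy | hy
          · rw [if_pos hy, if_pos hy]; ring_nf; linarith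
          · rw [if_neg hy, if_neg hy]; ring_nf; linarith
        · rw [if_neg h, if_neg h, if_neg h]; ring
      rw [key y₁, key y₂]
  set P₀ : Y → Y → ℝ := fun y y' =>
    if y' = a then (if y = a then 1/10 else 1/5)
    else if y' = b then (if y = a then 2/5 else 3/10) else d with hP₀def
  set P₁ : Y → Y → ℝ := fun y y' =>
    if y' = a then (if y = a then 3/10 else 1/5)
    else if y' = b then (if y = a then 1/5 else 3/10) else d with hP₁def
  set F : Y → Y → ℝ := fun y y' =>
    if y' = a then (if y = a then 9/10 else 1/5)
    else if y' = b then (if y = a then 1/10 else 3/10) else d with hFdef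
  set v : Y → ℝ := fun y => if y = a then 2 else 1 with hvdef
  set Q : Y → Y → ℝ := fun y y' => F y y' * v y' / (6/5 * v y) with hQdef
  have hvpos : ∀ y : Y, 0 < v y := by
    intro y; rw [hvdef]; dsimp only; split_ifs <;> norm_num
  -- explicit form of the rows of Q
  have hQA : ∀ y' : Y, Q a y' =
      (if y' = a then 3/4 else if y' = b then 1/24 else d * (5/12)) := by
    intro y'
    rw [hQdef, hFdef, hvdef]
    dsimp only
    simp only [eq_self_iff_true, if_true]
    split_ifs <;> first | (norm_num; done) | ring1
  have hba : b ≠ a := hab.symm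
  have hQB : ∀ y' : Y, Q b y' =
      (if y' = a then 1/3 else if y' = b then 1/4 else d * (5/6)) := by
    intro y'
    rw [hQdef, hFdef, hvdef]
    dsimp only
    simp only [hba, if_false]
    split_ifs <;> first | (norm_num; done) | ring1
  have hQO : ∀ y : Y, y ≠ a → ∀ y' : Y, Q y y' =
      (if y' = a then 1/3 else if y' = b then 1/4 else d * (5/6)) := by
    intro y hy y'
    rw [hQdef, hFdef, hvdef]
    dsimp only
    simp only [hy, if_false]
    split_ifs <;> first | (norm_num; done) | ring1
  have hFG : hadGeom (Set.univ : Set (Y × Y)) P₀ P₁ 2 = F := by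
    funext y y'
    have hu : hadGeom (Set.univ : Set (Y × Y)) P₀ P₁ 2 y y' =
        P₀ y y' ^ ((1:ℝ) - 2) * P₁ y y' ^ (2:ℝ) := by
      rw [hadGeom, Set.indicator_univ]
    rw [hu, hP₀def, hP₁def, hFdef]
    have h12 : ((1:ℝ) - 2) = ((-1 : ℤ) : ℝ) := by norm_num
    have h2 : ((2:ℝ)) = ((2 : ℕ) : ℝ) := by norm_num
    rw [h12, h2, Real.rpow_intCast, Real.rpow_natCast]
    dsimp only
    have hdne : d ≠ 0 := ne_of_gt hd
    rw [zpow_neg_one]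
    split_ifs <;>
      first
        | (norm_num; done)
        | (rw [sq]; field_simp; try ring1)
  refine ⟨P₀, P₁, ?_, ?_, 2, Q, ?_, ?_⟩
  · rw [hP₀def]
    exact hW (1/10) (2/5) (1/5) (3/10) (by norm_num) (by norm_num) (by norm_num)
      (by norm_num) (by norm_num) (by norm_num)
  · rw [hP₁def]
    exact hW (3/10) (1/5) (1/5) (3/10) (by norm_num) (by norm_num) (by norm_num)
      (by norm_num) (by norm_num) (by norm_num)
  · refine ⟨6/5, v, by norm_num, hvpos, ?_, ?_⟩
    · intro y y'
      rw [hFG, hQdef]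
    · intro y
      rcases eq_or_ne y a with h | h
      · subst h
        rw [Finset.sum_congr rfl fun y' _ => hQA y', hsum (3/4) (1/24) (d * (5/12))]
        linear_combination (5/12) * hmd
      · rw [Finset.sum_congr rfl fun y' _ => hQO y h y', hsum (1/3) (1/4) (d * (5/6))]
        linear_combination (5/6) * hmd
  · rintro ⟨-, hl⟩
    have hmem : ((κ a, κ c) : X × X) ∈ lumpedEdges (Set.univ : Set (Y × Y)) κ :=
      ⟨(a, c), Set.mem_univ _, rfl, rfl⟩
    have heq := hl (κ a) (κ c) hmem a b rfl hk.symm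
    set s : Finset Y := Finset.univ.filter fun y' => κ y' = κ c with hsdef
    have hans : a ∉ s := by
      rw [hsdef]; simp only [Finset.mem_filter, Finset.mem_univ, true_and]
      exact fun h => hca h.symm
    have hbns : b ∉ s := by
      rw [hsdef]; simp only [Finset.mem_filter, Finset.mem_univ, true_and]
      rw [← hk]; exact fun h => hca h.symm
    have e1 : blockSum κ Q a (κ c) = s.card * (d * (5/12)) := by
      unfold blockSum
      rw [← hsdef, Finset.sum_congr rfl fun y' _ => hQA y', sum_row_ite hab,
        if_neg hans, if_neg hbns]
      ring
    have e2 : blockSum κ Q b (κ c) = s.card * (d * (5/6)) := by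
      unfold blockSum
      rw [← hsdef, Finset.sum_congr rfl fun y' _ => hQB y', sum_row_ite hab,
        if_neg hans, if_neg hbns]
      ring
    rw [e1, e2] at heq
    have hcs : c ∈ s := by
      rw [hsdef]; simp
    have hcpos : 0 < (s.card : ℝ) := by
      exact_mod_cast Finset.card_pos.mpr ⟨c, hcs⟩
    nlinarith [mul_pos hcpos hd]
end

section
/- Assume W_κ(Y,E) is nonempty. Then the affine hull of G_κ(Y,E) inside the real vector space F(Y,E) ≅ ℝ^E is a linear subspace; equivalently, the zero matrix belongs to the affine hull of {log F : F ∈ F_κ⁺(Y,E)}, so that the affine hull of G_κ(Y,E) coincides with its linear span. -/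
open Finset

variable {Y X : Type*}

/-! ### Auxiliary material for the proof -/

open scoped Classical in
/-- The set of endpoints of edges from `y` into the block `S_{x'}`. -/
noncomputable def edgeTo [Fintype Y] [DecidableEq X] (E : Set (Y × Y)) (κ : Y → X)
    (y : Y) (x' : X) : Finset Y :=
  Finset.univ.filter (fun y' => κ y' = x' ∧ (y, y') ∈ E)

noncomputable def kkE [Fintype Y] [DecidableEq X] (E : Set (Y × Y)) (κ : Y → X)
    (y : Y) (x' : X) : ℕ :=
  (edgeTo E κ y x').card

noncomputable def Aval (m : ℕ) : ℝ := ((m : ℝ))⁻¹ ^ m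

noncomputable def Bval (m : ℕ) : ℝ := (1 - Aval m) / ((m : ℝ) - 1)

open scoped Classical in
noncomputable def Umat [Fintype Y] [DecidableEq X] (E : Set (Y × Y)) (κ : Y → X) :
    Y → Y → ℝ :=
  fun y y' => if (y, y') ∈ E then ((kkE E κ y (κ y') : ℝ))⁻¹ else 0

open scoped Classical in
noncomputable def Qmat [Fintype Y] [DecidableEq X] (E : Set (Y × Y)) (κ : Y → X)
    (e : Y × Y) : Y → Y → ℝ :=
  fun y y' => if (y, y') ∈ E then
      (if y = e.1 ∧ κ y' = κ e.2 then
        (if y' = e.2 then Aval (kkE E κ e.1 (κ e.2)) else Bval (kkE E κ e.1 (κ e.2)))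
      else ((kkE E κ y (κ y') : ℝ))⁻¹)
    else 0

def ValidE [Fintype Y] [DecidableEq X] (E : Set (Y × Y)) (κ : Y → X) (e : Y × Y) : Prop :=
  e ∈ E ∧ 2 ≤ kkE E κ e.1 (κ e.2)

open scoped Classical in
noncomputable def muW [Fintype Y] [DecidableEq X] (E : Set (Y × Y)) (κ : Y → X)
    (e : Y × Y) : ℝ :=
  if ValidE E κ e then
    Real.log (kkE E κ e.1 (κ e.2)) /
      (((kkE E κ e.1 (κ e.2) : ℝ) - 1) * Real.log (Bval (kkE E κ e.1 (κ e.2))))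
  else 0

noncomputable def wgt [Fintype Y] [Fintype X] [DecidableEq X] (E : Set (Y × Y)) (κ : Y → X) :
    Option (Y × Y) → ℝ :=
  fun i => Option.elim i (1 - ∑ e : Y × Y, muW E κ e) (fun e => muW E κ e)

open scoped Classical in
noncomputable def ptsG [Fintype Y] [DecidableEq X] (E : Set (Y × Y)) (κ : Y → X) :
    Option (Y × Y) → (Y → Y → ℝ) :=
  fun i => Option.elim i (logMat E (Umat E κ))
    (fun e => if ValidE E κ e then logMat E (Qmat E κ e) else logMat E (Umat E κ))

section AuxLemmas

variable [Fintype Y] [DecidableEq X] (E : Set (Y × Y)) (κ : Y → X)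

lemma mem_edgeTo {y y' : Y} {x' : X} :
    y' ∈ edgeTo E κ y x' ↔ κ y' = x' ∧ (y, y') ∈ E := by
  classical
  simp [edgeTo]

lemma self_mem_edgeTo {y y' : Y} (h : (y, y') ∈ E) : y' ∈ edgeTo E κ y (κ y') :=
  (mem_edgeTo E κ).2 ⟨rfl, h⟩

lemma kkE_pos {y y' : Y} (h : (y, y') ∈ E) : 1 ≤ kkE E κ y (κ y') :=
  Finset.card_pos.2 ⟨y', self_mem_edgeTo E κ h⟩

lemma blockSum_eq_sum_edgeTo {F : Y → Y → ℝ} (hF : MemF E F) (y : Y) (x' : X) :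
    blockSum κ F y x' = ∑ y' ∈ edgeTo E κ y x', F y y' := by
  classical
  rw [blockSum]
  refine (Finset.sum_subset ?_ ?_).symm
  · intro z hz
    rcases (mem_edgeTo E κ).1 hz with ⟨h1, _⟩
    simp [h1]
  · intro z hz hz'
    rcases Finset.mem_filter.1 hz with ⟨_, h1⟩
    refine hF _ _ (fun hzE => hz' ?_)
    exact (mem_edgeTo E κ).2 ⟨h1, hzE⟩

/-- Existence of a lumpable stochastic matrix forces every admissible block-row to be
nonempty. -/
lemma edgeTo_nonempty (hne : (Wkappa E κ).Nonempty) {y y' : Y} (h : (y, y') ∈ E)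
    (y₂ : Y) (hy₂ : κ y₂ = κ y) : (edgeTo E κ y₂ (κ y')).Nonempty := by
  classical
  obtain ⟨P, ⟨⟨hPF, hPpos⟩, _⟩, hPl⟩ := hne
  have hD : (κ y, κ y') ∈ lumpedEdges E κ := ⟨(y, y'), h, rfl, rfl⟩
  have heq : blockSum κ P y₂ (κ y') = blockSum κ P y (κ y') :=
    hPl _ _ hD y₂ y hy₂ rfl
  have hpos : 0 < blockSum κ P y (κ y') := by
    rw [blockSum_eq_sum_edgeTo E κ hPF]
    refine Finset.sum_pos ?_ ⟨y', self_mem_edgeTo E κ h⟩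
    intro z hz
    exact hPpos _ _ ((mem_edgeTo E κ).1 hz).2
  by_contra hempty
  rw [Finset.not_nonempty_iff_eq_empty] at hempty
  rw [blockSum_eq_sum_edgeTo E κ hPF, hempty, Finset.sum_empty] at heq
  rw [← heq] at hpos
  exact lt_irrefl _ hpos

/-- A matrix supported on `E`, positive on `E`, with all nonempty block-row sums equal
to `1`, is a lumpable member of `F⁺`. -/
lemma memFpos_lumpable_of_blockSums_one (hne : (Wkappa E κ).Nonempty)
    {F : Y → Y → ℝ} (hF : MemF E F) (hpos : ∀ y y', (y, y') ∈ E → 0 < F y y')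
    (h1 : ∀ y x', (edgeTo E κ y x').Nonempty → ∑ y' ∈ edgeTo E κ y x', F y y' = 1) :
    MemFpos E F ∧ Lumpable E κ F := by
  refine ⟨⟨hF, hpos⟩, ?_⟩
  rintro x x' ⟨⟨y, y'⟩, hyE, hy1, hy2⟩ y₁ y₂ hκ₁ hκ₂
  have h₁ : (edgeTo E κ y₁ (κ y')).Nonempty :=
    edgeTo_nonempty E κ hne hyE y₁ (hκ₁.trans hy1.symm)
  have h₂ : (edgeTo E κ y₂ (κ y')).Nonempty :=
    edgeTo_nonempty E κ hne hyE y₂ (hκ₂.trans hy1.symm)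
  obtain rfl : x' = κ y' := hy2.symm
  rw [blockSum_eq_sum_edgeTo E κ hF, blockSum_eq_sum_edgeTo E κ hF,
    h1 _ _ h₁, h1 _ _ h₂]

lemma Umat_memF : MemF E (Umat E κ) := by
  intro y y' h
  simp [Umat, h]

lemma Umat_pos {y y' : Y} (h : (y, y') ∈ E) : 0 < Umat E κ y y' := by
  classical
  have hk := kkE_pos E κ h
  simp only [Umat, if_pos h]
  have : (0:ℝ) < (kkE E κ y (κ y') : ℝ) := by exact_mod_cast hk
  exact inv_pos.2 this

lemma Umat_blockSum (y : Y) (x' : X) (hne : (edgeTo E κ y x').Nonempty) :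
    ∑ y' ∈ edgeTo E κ y x', Umat E κ y y' = 1 := by
  classical
  have hcard : (edgeTo E κ y x').card ≠ 0 := Finset.card_ne_zero_of_mem hne.choose_spec
  have : ∀ z ∈ edgeTo E κ y x', Umat E κ y z = ((kkE E κ y x' : ℝ))⁻¹ := by
    intro z hz
    rcases (mem_edgeTo E κ).1 hz with ⟨h1, h2⟩
    simp [Umat, h2, h1]
  rw [Finset.sum_congr rfl this, Finset.sum_const, nsmul_eq_mul, kkE]
  rw [mul_inv_cancel₀ (by exact_mod_cast hcard)]

lemma Umat_mem (hne : (Wkappa E κ).Nonempty) :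
    MemFpos E (Umat E κ) ∧ Lumpable E κ (Umat E κ) :=
  memFpos_lumpable_of_blockSums_one E κ hne (Umat_memF E κ)
    (fun _ _ h => Umat_pos E κ h) (fun y x' h => Umat_blockSum E κ y x' h)

lemma Aval_pos {m : ℕ} (hm : 2 ≤ m) : 0 < Aval m := by
  have : (0:ℝ) < (m:ℝ) := by exact_mod_cast Nat.lt_of_lt_of_le (by norm_num) hm
  exact pow_pos (inv_pos.2 this) m

lemma Aval_lt_one {m : ℕ} (hm : 2 ≤ m) : Aval m < 1 := by
  have h1 : (1:ℝ) < (m:ℝ) := by exact_mod_cast Nat.lt_of_lt_of_le (by norm_num) hm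
  have h0 : (0:ℝ) ≤ ((m:ℝ))⁻¹ := by positivity
  have h2 : ((m:ℝ))⁻¹ < 1 := inv_lt_one_of_one_lt₀ h1
  calc Aval m = ((m:ℝ))⁻¹ ^ m := rfl
    _ < 1 := pow_lt_one₀ h0 h2 (by omega)

lemma Bval_pos {m : ℕ} (hm : 2 ≤ m) : 0 < Bval m := by
  have h1 : (0:ℝ) < 1 - Aval m := by linarith [Aval_lt_one hm]
  have h2 : (0:ℝ) < (m:ℝ) - 1 := by
    have : (2:ℝ) ≤ (m:ℝ) := by exact_mod_cast hm
    linarith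
  exact div_pos h1 h2

lemma Bval_lt_one {m : ℕ} (hm : 2 ≤ m) : Bval m < 1 := by
  have hA := Aval_pos hm
  have h2 : (1:ℝ) ≤ (m:ℝ) - 1 := by
    have : (2:ℝ) ≤ (m:ℝ) := by exact_mod_cast hm
    linarith
  have : Bval m ≤ 1 - Aval m := by
    rw [Bval]
    exact div_le_self (by linarith [Aval_lt_one hm]) h2
  linarith

lemma log_Bval_neg {m : ℕ} (hm : 2 ≤ m) : Real.log (Bval m) < 0 :=
  Real.log_neg (Bval_pos hm) (Bval_lt_one hm)

lemma Qmat_memF (e : Y × Y) : MemF E (Qmat E κ e) := by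
  intro y y' h
  simp [Qmat, h]

lemma Qmat_pos {e : Y × Y} (he : ValidE E κ e) {y y' : Y} (h : (y, y') ∈ E) :
    0 < Qmat E κ e y y' := by
  classical
  simp only [Qmat, if_pos h]
  split_ifs with h1 h2
  · exact Aval_pos he.2
  · exact Bval_pos he.2
  · have hk := kkE_pos E κ h
    have : (0:ℝ) < (kkE E κ y (κ y') : ℝ) := by exact_mod_cast hk
    exact inv_pos.2 this

lemma Qmat_blockSum {e : Y × Y} (he : ValidE E κ e) (y : Y) (x' : X)
    (hne : (edgeTo E κ y x').Nonempty) :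
    ∑ y' ∈ edgeTo E κ y x', Qmat E κ e y y' = 1 := by
  classical
  by_cases hsp : y = e.1 ∧ x' = κ e.2
  · obtain ⟨hy, hx'⟩ := hsp
    have hm2 : 2 ≤ kkE E κ e.1 (κ e.2) := he.2
    have heE : (y, e.2) ∈ E := by
      rw [hy, Prod.mk.eta]; exact he.1
    have he2 : e.2 ∈ edgeTo E κ y x' := (mem_edgeTo E κ).2 ⟨hx'.symm, heE⟩
    have hval : ∀ z ∈ edgeTo E κ y x',
        Qmat E κ e y z = (if z = e.2 then Aval (kkE E κ e.1 (κ e.2))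
          else Bval (kkE E κ e.1 (κ e.2))) := by
      intro z hz
      rcases (mem_edgeTo E κ).1 hz with ⟨h1, h2⟩
      simp only [Qmat, if_pos h2]
      rw [if_pos ⟨hy, by rw [h1, hx']⟩]
    rw [Finset.sum_congr rfl hval, ← Finset.add_sum_erase _ _ he2, if_pos rfl]
    have herase : ∀ z ∈ (edgeTo E κ y x').erase e.2,
        (if z = e.2 then Aval (kkE E κ e.1 (κ e.2)) else Bval (kkE E κ e.1 (κ e.2)))
          = Bval (kkE E κ e.1 (κ e.2)) := fun z hz => if_neg (Finset.mem_erase.1 hz).1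
    rw [Finset.sum_congr rfl herase, Finset.sum_const, Finset.card_erase_of_mem he2]
    have hcard : (edgeTo E κ y x').card = kkE E κ e.1 (κ e.2) := by
      rw [hy, hx']; rfl
    rw [hcard, nsmul_eq_mul]
    have h1m : 1 ≤ kkE E κ e.1 (κ e.2) := by omega
    have hcast : ((kkE E κ e.1 (κ e.2) - 1 : ℕ) : ℝ) = (kkE E κ e.1 (κ e.2) : ℝ) - 1 := by
      push_cast [Nat.cast_sub h1m]; ring
    have hne1 : ((kkE E κ e.1 (κ e.2) : ℝ)) - 1 ≠ 0 := by
      have : (2:ℝ) ≤ (kkE E κ e.1 (κ e.2) : ℝ) := by exact_mod_cast hm2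
      linarith
    rw [hcast, Bval, mul_div_cancel₀ _ hne1]
    ring
  · have hval : ∀ z ∈ edgeTo E κ y x', Qmat E κ e y z = Umat E κ y z := by
      intro z hz
      rcases (mem_edgeTo E κ).1 hz with ⟨h1, h2⟩
      have hns : ¬ (y = e.1 ∧ κ z = κ e.2) := by
        intro hc
        exact hsp ⟨hc.1, h1.symm.trans hc.2⟩
      simp only [Qmat, Umat, if_pos h2]
      rw [if_neg hns]
    rw [Finset.sum_congr rfl hval]
    exact Umat_blockSum E κ y x' hne

lemma Qmat_mem (hne : (Wkappa E κ).Nonempty) {e : Y × Y} (he : ValidE E κ e) :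
    MemFpos E (Qmat E κ e) ∧ Lumpable E κ (Qmat E κ e) :=
  memFpos_lumpable_of_blockSums_one E κ hne (Qmat_memF E κ e)
    (fun _ _ h => Qmat_pos E κ he h) (fun y x' h => Qmat_blockSum E κ he y x' h)

lemma ptsG_mem_Gkappa (hne : (Wkappa E κ).Nonempty) (i : Option (Y × Y)) :
    ptsG E κ i ∈ Gkappa E κ := by
  classical
  cases i with
  | none =>
    obtain ⟨h1, h2⟩ := Umat_mem E κ hne
    exact ⟨Umat E κ, h1, h2, rfl⟩
  | some e =>
    by_cases he : ValidE E κ e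
    · obtain ⟨h1, h2⟩ := Qmat_mem E κ hne he
      refine ⟨Qmat E κ e, h1, h2, ?_⟩
      simp [ptsG, he]
    · obtain ⟨h1, h2⟩ := Umat_mem E κ hne
      refine ⟨Umat E κ, h1, h2, ?_⟩
      simp [ptsG, he]

variable [Fintype X]

lemma wgt_sum : ∑ i : Option (Y × Y), wgt E κ i = 1 := by
  rw [Fintype.sum_option]
  simp [wgt]

lemma logMat_apply_of_mem {F : Y → Y → ℝ} {y y' : Y} (h : (y, y') ∈ E) :
    logMat E F y y' = Real.log (F y y') := by
  rw [logMat, Set.indicator_of_mem h]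

lemma logMat_apply_of_notMem {F : Y → Y → ℝ} {y y' : Y} (h : (y, y') ∉ E) :
    logMat E F y y' = 0 := by
  rw [logMat, Set.indicator_of_notMem h]

lemma sum_option_split (f : Option (Y × Y) → ℝ) :
    ∑ i : Option (Y × Y), f i = f none + ∑ e : Y × Y, f (some e) := by
  rw [univ_option, Finset.sum_insertNone]

/-- The key entrywise computation: the affine combination of logs vanishes. -/
lemma key_sum_zero (y y' : Y) :
    ∑ i : Option (Y × Y), wgt E κ i * ptsG E κ i y y' = 0 := by
  classical
  by_cases hE : (y, y') ∈ E
  case neg =>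
    refine Finset.sum_eq_zero fun i _ => ?_
    have hz : ptsG E κ i y y' = 0 := by
      cases i with
      | none => exact logMat_apply_of_notMem E hE
      | some e =>
        simp only [ptsG, Option.elim]
        split_ifs <;> exact logMat_apply_of_notMem E hE
    rw [hz, mul_zero]
  case pos =>
    set m := kkE E κ y (κ y') with hmdef
    have hm1 : 1 ≤ m := kkE_pos E κ hE
    set L := Real.log (m : ℝ) with hLdef
    have hU : ptsG E κ none y y' = - L := by
      simp only [ptsG, Option.elim]
      rw [logMat_apply_of_mem E hE]
      simp only [Umat, if_pos hE]
      rw [← hmdef, Real.log_inv]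
    have hSig : ∑ i : Option (Y × Y), wgt E κ i * (ptsG E κ i y y' + L) = L := by
      rw [sum_option_split, hU]
      rw [neg_add_cancel, mul_zero, zero_add]
      -- vanishing off the special set
      set T : Finset (Y × Y) := (edgeTo E κ y (κ y')).image (fun z => (y, z)) with hT
      have hvan : ∀ e : Y × Y, e ∉ T → wgt E κ (some e) * (ptsG E κ (some e) y y' + L) = 0 := by
        intro e heT
        by_cases hv : ValidE E κ e
        · have hns : ¬ (y = e.1 ∧ κ y' = κ e.2) := by
            intro hc
            apply heT
            refine Finset.mem_image.2 ⟨e.2, ?_, ?_⟩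
            · refine (mem_edgeTo E κ).2 ⟨hc.2.symm, ?_⟩
              rw [hc.1, Prod.mk.eta]; exact hv.1
            · rw [hc.1, Prod.mk.eta]
          have hpv : ptsG E κ (some e) y y' = - L := by
            simp only [ptsG, Option.elim, if_pos hv]
            rw [logMat_apply_of_mem E hE]
            simp only [Qmat, if_pos hE]
            rw [if_neg hns, ← hmdef, Real.log_inv]
          rw [hpv, neg_add_cancel, mul_zero]
        · have hw : wgt E κ (some e) = 0 := by
            simp only [wgt, Option.elim, muW, if_neg hv]
          rw [hw, zero_mul]
      rw [← Finset.sum_subset (Finset.subset_univ T) (fun e _ he => hvan e he)]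
      by_cases hm2 : 2 ≤ m
      · -- the interesting case
        have hinj : ∀ a ∈ edgeTo E κ y (κ y'), ∀ b ∈ edgeTo E κ y (κ y'),
            (fun z => (y, z)) a = (fun z => (y, z)) b → a = b := by
          intro a _ b _ h
          exact (Prod.ext_iff.1 h).2
        rw [hT, Finset.sum_image hinj]
        set LB := Real.log (Bval m) with hLBdef
        set μ := L / (((m : ℝ) - 1) * LB) with hμdef
        have hterm : ∀ z ∈ edgeTo E κ y (κ y'),
            wgt E κ (some (y, z)) * (ptsG E κ (some (y, z)) y y' + L) =
            μ * (Real.log (if y' = z then Aval m else Bval m) + L) := by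
          intro z hz
          rcases (mem_edgeTo E κ).1 hz with ⟨hz1, hz2⟩
          have hkz : kkE E κ (y, z).1 (κ (y, z).2) = m := by
            simp only
            rw [hz1, ← hmdef]
          have hval : ValidE E κ (y, z) := by
            refine ⟨hz2, ?_⟩
            rw [hkz]; exact hm2
          have hw : wgt E κ (some (y, z)) = μ := by
            simp only [wgt, Option.elim, muW, if_pos hval, hkz, hμdef, hLdef, hLBdef]
          have hQ : Qmat E κ (y, z) y y' =
              (if y' = z then Aval (kkE E κ y (κ z)) else Bval (kkE E κ y (κ z))) := by
            have hcond : y = (y, z).1 ∧ κ y' = κ (y, z).2 := ⟨rfl, hz1.symm⟩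
            show (if (y, y') ∈ E then
                (if y = (y, z).1 ∧ κ y' = κ (y, z).2 then
                  (if y' = (y, z).2 then Aval (kkE E κ (y, z).1 (κ (y, z).2))
                    else Bval (kkE E κ (y, z).1 (κ (y, z).2)))
                else ((kkE E κ y (κ y') : ℝ))⁻¹)
              else 0) = _
            rw [if_pos hE, if_pos hcond]
          have hpv : ptsG E κ (some (y, z)) y y' =
              Real.log (if y' = z then Aval m else Bval m) := by
            simp only [ptsG, Option.elim, if_pos hval]
            rw [logMat_apply_of_mem E hE, hQ, hz1, ← hmdef]
          rw [hw, hpv]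
        rw [Finset.sum_congr rfl hterm]
        have hy'mem : y' ∈ edgeTo E κ y (κ y') := self_mem_edgeTo E κ hE
        rw [← Finset.add_sum_erase _ _ hy'mem, if_pos rfl]
        have herase : ∀ z ∈ (edgeTo E κ y (κ y')).erase y',
            μ * (Real.log (if y' = z then Aval m else Bval m) + L) =
            μ * (Real.log (Bval m) + L) := by
          intro z hz
          rw [if_neg (fun h => (Finset.mem_erase.1 hz).1 h.symm)]
        rw [Finset.sum_congr rfl herase, Finset.sum_const,
          Finset.card_erase_of_mem hy'mem, show (edgeTo E κ y (κ y')).card = m from rfl, nsmul_eq_mul]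
        have hcast : ((m - 1 : ℕ) : ℝ) = (m : ℝ) - 1 := by
          push_cast [Nat.cast_sub hm1]; ring
        have hlogA : Real.log (Aval m) = - ((m : ℝ) * L) := by
          rw [Aval, Real.log_pow, Real.log_inv, hLdef]
          ring
        have hm1R : (1 : ℝ) < (m : ℝ) := by exact_mod_cast hm2
        have hD1 : (m : ℝ) - 1 ≠ 0 := by linarith
        have hD2 : LB ≠ 0 := ne_of_lt (log_Bval_neg hm2)
        rw [hcast, hlogA, ← hLBdef, hμdef]
        field_simp
        ring
      · -- trivial case `m = 1`
        have hm : m = 1 := by omega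
        have hzero : ∀ e ∈ T, wgt E κ (some e) * (ptsG E κ (some e) y y' + L) = 0 := by
          intro e heT
          rcases Finset.mem_image.1 heT with ⟨z, hz, rfl⟩
          rcases (mem_edgeTo E κ).1 hz with ⟨hz1, _⟩
          have hnv : ¬ ValidE E κ (y, z) := by
            intro hv
            have : kkE E κ (y, z).1 (κ (y, z).2) = m := by
              simp only
              rw [hz1, ← hmdef]
            have h2 := hv.2
            rw [this] at h2
            omega
          have hw : wgt E κ (some (y, z)) = 0 := by
            simp only [wgt, Option.elim, muW, if_neg hnv]
          rw [hw, zero_mul]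
        rw [Finset.sum_eq_zero hzero, hLdef, hm]
        simp
    have expand : (∑ i : Option (Y × Y), wgt E κ i * ptsG E κ i y y') =
        (∑ i : Option (Y × Y), wgt E κ i * (ptsG E κ i y y' + L)) -
          (∑ i : Option (Y × Y), wgt E κ i) * L := by
      rw [Finset.sum_mul, ← Finset.sum_sub_distrib]
      exact Finset.sum_congr rfl fun i _ => by ring
    rw [expand, hSig, wgt_sum E κ, one_mul, sub_self]

end AuxLemmas

/-- the affine hull of `G_κ(Y,E)` in `F(Y,E)` is a linear subspace:
the zero matrix lies in the affine hull, and the affine hull coincides with the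
linear span. -/
theorem affineHull_Gkappa_is_linear [Fintype Y] [Fintype X] [DecidableEq X]
    (E : Set (Y × Y)) (κ : Y → X) (hsurj : Function.Surjective κ)
    (hconn : StronglyConnected E)
    (hne : (Wkappa E κ).Nonempty) :
    (0 : Y → Y → ℝ) ∈ affineSpan ℝ (Gkappa E κ) ∧
      (affineSpan ℝ (Gkappa E κ) : Set (Y → Y → ℝ)) =
        (Submodule.span ℝ (Gkappa E κ) : Set (Y → Y → ℝ)) := by
  classical
  have h0 : (0 : Y → Y → ℝ) ∈ affineSpan ℝ (Gkappa E κ) := by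
    have hmem :=
      affineCombination_mem_affineSpan (k := ℝ) (s := (Finset.univ : Finset (Option (Y × Y))))
        (wgt_sum E κ) (ptsG E κ)
    have hrange : Set.range (ptsG E κ) ⊆ Gkappa E κ := by
      rintro _ ⟨i, rfl⟩
      exact ptsG_mem_Gkappa E κ hne i
    have hle := affineSpan_mono ℝ hrange
    have hval : (Finset.univ : Finset (Option (Y × Y))).affineCombination ℝ (ptsG E κ)
        (wgt E κ) = (0 : Y → Y → ℝ) := by
      rw [Finset.affineCombination_eq_linear_combination _ _ _ (wgt_sum E κ)]
      funext y y'
      have := key_sum_zero E κ y y'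
      calc (∑ i : Option (Y × Y), wgt E κ i • ptsG E κ i) y y'
          = ∑ i : Option (Y × Y), wgt E κ i * ptsG E κ i y y' := by
            rw [Finset.sum_apply]
            simp [Finset.sum_apply]
        _ = 0 := this
    rw [hval] at hmem
    exact hle hmem
  refine ⟨h0, ?_⟩
  rw [← affineSpan_insert_eq_affineSpan ℝ h0, affineSpan_insert_zero]
end

section
/- Assume W_κ(Y,E) is nonempty. Suppose for each (x,x') ∈ D we are given a set E_{x,x'} ⊆ E ∩ (S_x × S_{x'}) consisting of exactly |S_x| edges with pairwise distinct first coordinates. Then the family of matrices consisting of, for each (x₀,x₀') ∈ U, the indicator matrix of the edge set E_{x₀,x₀'}, together with, for each (y₀,y₀') ∈ R, the indicator matrix of the single edge (y₀,y₀'), forms a basis of the linear span of G_κ(Y,E) in F(Y,E); in particular, dim span(G_κ(Y,E)) = |U| + |R|. -/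
open Finset

variable {Y X : Type*}

/-- `M_{x,x'}`: the set of merging rows of the block `(x,x')`. -/
def mergingRows (E : Set (Y × Y)) (κ : Y → X) (x x' : X) : Set Y :=
  {y | κ y = x ∧ ∃ y₁' y₂' : Y, y₁' ≠ y₂' ∧ κ y₁' = x' ∧ κ y₂' = x' ∧
    (y, y₁') ∈ E ∧ (y, y₂') ∈ E}

/-- `U`: blocks of `D` containing at least one non-merging row (`M_{x,x'} ≠ S_x`). -/
def Uset (E : Set (Y × Y)) (κ : Y → X) : Set (X × X) :=
  {p | p ∈ lumpedEdges E κ ∧ ∃ y : Y, κ y = p.1 ∧ y ∉ mergingRows E κ p.1 p.2}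

/-- `R`: edges of `E` whose source is a merging row of its block. -/
def Rset (E : Set (Y × Y)) (κ : Y → X) : Set (Y × Y) :=
  {p | p ∈ E ∧ p.1 ∈ mergingRows E κ (κ p.1) (κ p.2)}

/-- The candidate basis family: for each block `(x₀,x₀') ∈ U`, the indicator matrix of
the anchor edge set `E_{x₀,x₀'}`; for each `(y₀,y₀') ∈ R`, the indicator matrix of the
single edge `(y₀,y₀')`. -/
noncomputable def anchorBasis (E : Set (Y × Y)) (κ : Y → X)
    (Eanch : X × X → Set (Y × Y)) :
    ↥(Uset E κ) ⊕ ↥(Rset E κ) → (Y → Y → ℝ)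
  | Sum.inl u => fun y y' => (Eanch u.val).indicator (fun _ => (1 : ℝ)) (y, y')
  | Sum.inr r => fun y y' => ({r.val} : Set (Y × Y)).indicator (fun _ => (1 : ℝ)) (y, y')

section AuxLemmas

lemma blockSum_eq_of_nonmerging [Fintype Y] [DecidableEq X] [DecidableEq Y]
    (E : Set (Y × Y)) (κ : Y → X) (F : Y → Y → ℝ) (hF : MemF E F)
    {e : Y × Y} (he : e ∈ E)
    (hnm : e.1 ∉ mergingRows E κ (κ e.1) (κ e.2)) :
    blockSum κ F e.1 (κ e.2) = F e.1 e.2 := by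
  classical
  unfold blockSum
  apply Finset.sum_eq_single_of_mem e.2 (by simp)
  intro b hb hbe
  by_contra hFb
  have hEb : (e.1, b) ∈ E := by
    by_contra h; exact hFb (hF _ _ h)
  exact hnm ⟨rfl, b, e.2, hbe, (Finset.mem_filter.mp hb).2, rfl, hEb,
    (by rw [Prod.mk.eta]; exact he)⟩

lemma F_const_on_nonmerging [Fintype Y] [DecidableEq X] [DecidableEq Y]
    (E : Set (Y × Y)) (κ : Y → X) (F : Y → Y → ℝ) (hF : MemF E F)
    (hL : Lumpable E κ F) {e₁ e₂ : Y × Y} (h1 : e₁ ∈ E) (h2 : e₂ ∈ E)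
    (hx : κ e₁.1 = κ e₂.1) (hx' : κ e₁.2 = κ e₂.2)
    (hm1 : e₁.1 ∉ mergingRows E κ (κ e₁.1) (κ e₁.2))
    (hm2 : e₂.1 ∉ mergingRows E κ (κ e₂.1) (κ e₂.2)) :
    F e₁.1 e₁.2 = F e₂.1 e₂.2 := by
  have hD : (κ e₁.1, κ e₁.2) ∈ lumpedEdges E κ := ⟨e₁, h1, rfl, rfl⟩
  have key := hL (κ e₁.1) (κ e₁.2) hD e₁.1 e₂.1 rfl hx.symm
  rw [blockSum_eq_of_nonmerging E κ F hF h1 hm1] at key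
  rw [hx', blockSum_eq_of_nonmerging E κ F hF h2 hm2] at key
  exact key

lemma logMat_mem_Gkappa [Fintype Y] [DecidableEq X] (E : Set (Y × Y)) (κ : Y → X)
    {F : Y → Y → ℝ} (h1 : MemFpos E F) (h2 : Lumpable E κ F) :
    logMat E F ∈ Gkappa E κ := ⟨F, h1, h2, rfl⟩

open Classical in
lemma blockIndicator_mem_span [Fintype Y] [DecidableEq X] [DecidableEq Y]
    (E : Set (Y × Y)) (κ : Y → X) {F : Y → Y → ℝ}
    (hF : MemFpos E F) (hL : Lumpable E κ F) (p : X × X) :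
    (fun y y' => if (y, y') ∈ E ∧ κ y = p.1 ∧ κ y' = p.2 then (1:ℝ) else 0) ∈
      Submodule.span ℝ (Gkappa E κ) := by
  classical
  set F₂ : Y → Y → ℝ := fun y y' =>
    (if κ y = p.1 ∧ κ y' = p.2 then Real.exp 1 else 1) * F y y' with hF₂
  have hfacpos : ∀ y y', 0 < (if κ y = p.1 ∧ κ y' = p.2 then Real.exp 1 else 1) := by
    intro y y'; split <;> positivity
  have hmem : MemFpos E F₂ := by
    constructor
    · intro y y' h; simp only [hF₂]; rw [hF.1 y y' h, mul_zero]
    · intro y y' h; exact mul_pos (hfacpos y y') (hF.2 y y' h)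
  have hbs : ∀ (y : Y) (x' : X), blockSum κ F₂ y x'
      = (if κ y = p.1 ∧ x' = p.2 then Real.exp 1 else 1) * blockSum κ F y x' := by
    intro y x'
    unfold blockSum
    rw [Finset.mul_sum]
    apply Finset.sum_congr rfl
    intro y' hy'
    have h : κ y' = x' := (Finset.mem_filter.mp hy').2
    simp only [hF₂]; rw [h]
  have hlump : Lumpable E κ F₂ := by
    intro x x' hD y₁ y₂ hy₁ hy₂
    rw [hbs, hbs, hy₁, hy₂, hL x x' hD y₁ y₂ hy₁ hy₂]
  have key : (fun y y' => if (y, y') ∈ E ∧ κ y = p.1 ∧ κ y' = p.2 then (1:ℝ) else 0)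
      = logMat E F₂ - logMat E F := by
    funext y y'
    by_cases hE : (y, y') ∈ E
    · have hFne : F y y' ≠ 0 := ne_of_gt (hF.2 y y' hE)
      have hfne : (if κ y = p.1 ∧ κ y' = p.2 then Real.exp 1 else 1) ≠ 0 :=
        ne_of_gt (hfacpos y y')
      simp only [Pi.sub_apply, logMat, Set.indicator_of_mem hE, hF₂]
      rw [Real.log_mul hfne hFne]
      by_cases hc : κ y = p.1 ∧ κ y' = p.2
      · simp [hE, hc, Real.log_exp]
      · simp [hE, hc]
    · have : ¬((y, y') ∈ E ∧ κ y = p.1 ∧ κ y' = p.2) := fun h => hE h.1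
      simp [logMat, Set.indicator_of_notMem hE, this]
  rw [key]
  exact sub_mem (Submodule.subset_span (logMat_mem_Gkappa E κ hmem hlump))
    (Submodule.subset_span (logMat_mem_Gkappa E κ hF hL))

lemma singleEdge_mem_span [Fintype Y] [DecidableEq X] [DecidableEq Y]
    (E : Set (Y × Y)) (κ : Y → X) {F : Y → Y → ℝ}
    (hF : MemFpos E F) (hL : Lumpable E κ F) {r : Y × Y} (hr : r ∈ Rset E κ) :
    (fun y y' => if (y, y') = r then (1:ℝ) else 0) ∈ Submodule.span ℝ (Gkappa E κ) := by
  classical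
  obtain ⟨y₀, y₀'⟩ := r
  obtain ⟨hE₀, -, w₁, w₂, hw12, hκ1, hκ2, hEw1, hEw2⟩ := hr
  set y₁ : Y := if w₁ = y₀' then w₂ else w₁ with hy₁def
  have hy₁ : y₁ ≠ y₀' ∧ κ y₁ = κ y₀' ∧ (y₀, y₁) ∈ E := by
    rw [hy₁def]; split_ifs with h
    · exact ⟨fun hc => hw12 (h.trans hc.symm), hκ2, hEw2⟩
    · exact ⟨h, hκ1, hEw1⟩
  obtain ⟨hne2, hκy₁, hEy₁⟩ := hy₁
  set a := F y₀ y₀' with ha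
  set b := F y₀ y₁ with hb
  have ha0 : 0 < a := hF.2 _ _ hE₀
  have hb0 : 0 < b := hF.2 _ _ hEy₁
  set T : ℝ → Y → Y → ℝ := fun t y y' =>
    if (y, y') = (y₀, y₀') then t else if (y, y') = (y₀, y₁) then a + b - t else F y y'
    with hT
  have hTmem : ∀ t : ℝ, 0 < t → t < a + b → MemFpos E (T t) := by
    intro t ht1 ht2
    constructor
    · intro y y' h
      simp only [hT]
      split_ifs with h1 h2
      · exact absurd hE₀ (h1 ▸ h)
      · exact absurd hEy₁ (h2 ▸ h)
      · exact hF.1 y y' h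
    · intro y y' h
      simp only [hT]
      split_ifs with h1 h2
      · exact ht1
      · linarith
      · exact hF.2 y y' h
  have hbsT : ∀ (t : ℝ) (y : Y) (x' : X), blockSum κ (T t) y x' = blockSum κ F y x' := by
    intro t y x'
    by_cases hy : y = y₀
    · rw [hy]
      by_cases hx : x' = κ y₀'
      · rw [hx]
        unfold blockSum
        rw [← sub_eq_zero, ← Finset.sum_sub_distrib]
        have hpt : ∀ y' : Y, T t y₀ y' - F y₀ y' =
            (if y' = y₀' then t - a else 0) + (if y' = y₁ then a - t else 0) := by
          intro y'
          simp only [hT, Prod.mk.injEq, eq_self_iff_true, true_and]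
          split_ifs with h1 h2 h2
          · exact absurd (h1.symm.trans h2) (Ne.symm hne2)
          · rw [h1, ← ha]; ring
          · rw [h2, ← hb]; ring
          · ring
        have hm1 : y₀' ∈ Finset.univ.filter (fun y'' => κ y'' = κ y₀') := by simp
        have hm2 : y₁ ∈ Finset.univ.filter (fun y'' => κ y'' = κ y₀') := by simp [hκy₁]
        rw [Finset.sum_congr rfl (fun y' _ => hpt y'), Finset.sum_add_distrib,
          Finset.sum_ite_eq' _ y₀' (fun _ => t - a), Finset.sum_ite_eq' _ y₁ (fun _ => a - t),
          if_pos hm1, if_pos hm2]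
        ring
      · unfold blockSum
        apply Finset.sum_congr rfl
        intro y' hy'
        have h2 : κ y' = x' := (Finset.mem_filter.mp hy').2
        simp only [hT]
        rw [if_neg, if_neg]
        · exact fun h => hx (by
            have hyy : y' = y₁ := congrArg Prod.snd h
            rw [← h2, hyy]; exact hκy₁)
        · exact fun h => hx (by
            have hyy : y' = y₀' := congrArg Prod.snd h
            rw [← h2, hyy])
    · unfold blockSum
      apply Finset.sum_congr rfl
      intro y' _
      simp only [hT]
      rw [if_neg (fun h => hy (congrArg Prod.fst h)), if_neg (fun h => hy (congrArg Prod.fst h))]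
  have hTlump : ∀ t : ℝ, Lumpable E κ (T t) := by
    intro t x x' hD z₁ z₂ h1 h2
    rw [hbsT, hbsT]; exact hL x x' hD z₁ z₂ h1 h2
  set χ₀ : Y → Y → ℝ := fun y y' => if (y, y') = (y₀, y₀') then 1 else 0 with hχ₀
  set χ₁ : Y → Y → ℝ := fun y y' => if (y, y') = (y₀, y₁) then 1 else 0 with hχ₁
  have hδ : ∀ t : ℝ, 0 < t → t < a + b →
      logMat E (T t) - logMat E F =
      (Real.log t - Real.log a) • χ₀ + (Real.log (a + b - t) - Real.log b) • χ₁ := by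
    intro t ht1 ht2
    funext y y'
    simp only [Pi.sub_apply, Pi.add_apply, Pi.smul_apply, smul_eq_mul, hχ₀, hχ₁]
    by_cases hE : (y, y') ∈ E
    · simp only [logMat, Set.indicator_of_mem hE, hT]
      by_cases h1 : (y, y') = (y₀, y₀')
      · have h1a : y = y₀ := congrArg Prod.fst h1
        have h1b : y' = y₀' := congrArg Prod.snd h1
        rw [h1a, h1b]
        have hB : ((y₀, y₀') : Y × Y) ≠ (y₀, y₁) := by
          intro h; exact hne2 (congrArg Prod.snd h).symm
        rw [if_pos rfl, if_pos rfl, if_neg hB, ← ha]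
        ring
      · by_cases h2 : (y, y') = (y₀, y₁)
        · have h2a : y = y₀ := congrArg Prod.fst h2
          have h2b : y' = y₁ := congrArg Prod.snd h2
          rw [h2a, h2b]
          have hB : ((y₀, y₁) : Y × Y) ≠ (y₀, y₀') := fun h => hne2 (congrArg Prod.snd h)
          rw [if_neg hB, if_pos rfl, if_neg hB, if_pos rfl, ← hb]
          ring
        · rw [if_neg h1, if_neg h2, if_neg h1, if_neg h2]
          ring
    · have h1 : (y, y') ≠ (y₀, y₀') := fun h => hE (h.symm ▸ hE₀)
      have h2 : (y, y') ≠ (y₀, y₁) := fun h => hE (h.symm ▸ hEy₁)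
      simp [logMat, Set.indicator_of_notMem hE, h1, h2]
  have hmemδ : ∀ t : ℝ, 0 < t → t < a + b →
      (Real.log t - Real.log a) • χ₀ + (Real.log (a + b - t) - Real.log b) • χ₁
        ∈ Submodule.span ℝ (Gkappa E κ) := by
    intro t h1 h2
    rw [← hδ t h1 h2]
    exact sub_mem (Submodule.subset_span (logMat_mem_Gkappa E κ (hTmem t h1 h2) (hTlump t)))
      (Submodule.subset_span (logMat_mem_Gkappa E κ hF hL))
  have hab : 0 < a + b := by linarith
  have hC₁pos : 0 < Real.log (a + b) - Real.log b := by
    have := Real.log_lt_log hb0 (by linarith : b < a + b); linarith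
  have hC₂pos : 0 < Real.log (a + b) - Real.log a := by
    have := Real.log_lt_log ha0 (by linarith : a < a + b); linarith
  set M : ℝ := max (Real.log (a + b) - Real.log b) (Real.log (a + b) - Real.log a) + 1 with hM
  have hMpos : 0 < M := by
    have h1 := le_max_left (Real.log (a + b) - Real.log b) (Real.log (a + b) - Real.log a)
    rw [hM]; linarith
  have hexp0 : 0 < Real.exp (-M) := Real.exp_pos _
  have hexp1 : Real.exp (-M) < 1 := Real.exp_lt_one_iff.mpr (by linarith)
  set t₁ : ℝ := a * Real.exp (-M) with ht₁
  set t₂ : ℝ := a + b - b * Real.exp (-M) with ht₂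
  have ht₁0 : 0 < t₁ := mul_pos ha0 hexp0
  have ht₁a : t₁ < a := by rw [ht₁]; nlinarith
  have ht₁ab : t₁ < a + b := by linarith
  have hbe : b * Real.exp (-M) < b := by nlinarith
  have hbe0 : 0 < b * Real.exp (-M) := mul_pos hb0 hexp0
  have ht₂a : a < t₂ := by rw [ht₂]; linarith
  have ht₂ab : t₂ < a + b := by rw [ht₂]; linarith
  have ht₂0 : 0 < t₂ := by linarith
  have hp₁ : Real.log t₁ - Real.log a = -M := by
    rw [ht₁, Real.log_mul (ne_of_gt ha0) (ne_of_gt hexp0), Real.log_exp]; ring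
  have hq₂ : Real.log (a + b - t₂) - Real.log b = -M := by
    have h : a + b - t₂ = b * Real.exp (-M) := by rw [ht₂]; ring
    rw [h, Real.log_mul (ne_of_gt hb0) (ne_of_gt hexp0), Real.log_exp]; ring
  have m₁ := hmemδ t₁ ht₁0 ht₁ab
  have m₂ := hmemδ t₂ ht₂0 ht₂ab
  rw [hp₁] at m₁
  rw [hq₂] at m₂
  set q₁ : ℝ := Real.log (a + b - t₁) - Real.log b with hq₁
  set p₂ : ℝ := Real.log t₂ - Real.log a with hp₂
  have hq₁pos : 0 < q₁ := by
    have hlt : b < a + b - t₁ := by linarith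
    have := Real.log_lt_log hb0 hlt
    rw [hq₁]; linarith
  have hq₁lt : q₁ < M := by
    have hlt : a + b - t₁ < a + b := by linarith
    have h1 := Real.log_lt_log (by linarith : (0:ℝ) < a + b - t₁) hlt
    have h2 := le_max_left (Real.log (a + b) - Real.log b) (Real.log (a + b) - Real.log a)
    rw [hq₁, hM]; linarith
  have hp₂pos : 0 < p₂ := by
    have := Real.log_lt_log ha0 ht₂a
    rw [hp₂]; linarith
  have hp₂lt : p₂ < M := by
    have h1 := Real.log_lt_log ht₂0 ht₂ab
    have h2 := le_max_right (Real.log (a + b) - Real.log b) (Real.log (a + b) - Real.log a)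
    rw [hp₂, hM]; linarith
  set det : ℝ := M * M - p₂ * q₁ with hdet
  have hdetpos : 0 < det := by
    rw [hdet]; nlinarith
  have hkey : χ₀ = det⁻¹ • ((-M) • ((-M) • χ₀ + q₁ • χ₁) - q₁ • (p₂ • χ₀ + (-M) • χ₁)) := by
    funext y y'
    simp only [Pi.smul_apply, Pi.sub_apply, Pi.add_apply, smul_eq_mul]
    rw [show (-M) * ((-M) * χ₀ y y' + q₁ * χ₁ y y') - q₁ * (p₂ * χ₀ y y' + (-M) * χ₁ y y')
        = det * χ₀ y y' by rw [hdet]; ring, inv_mul_cancel_left₀ (ne_of_gt hdetpos)]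
  rw [hkey]
  exact Submodule.smul_mem _ _ (sub_mem (Submodule.smul_mem _ _ m₁) (Submodule.smul_mem _ _ m₂))

end AuxLemmas

/-- given, for each block `(x,x') ∈ D`, a set `E_{x,x'}` of exactly `|S_x|`
anchor edges of the block with pairwise distinct first coordinates, the indicated family
is a basis of the linear span of `G_κ(Y,E)`; in particular
`dim span G_κ(Y,E) = |U| + |R|`. -/
theorem basis_of_span_Gkappa [Fintype Y] [Fintype X] [DecidableEq X] [DecidableEq Y]
    (E : Set (Y × Y)) (κ : Y → X) (hsurj : Function.Surjective κ)
    (hconn : StronglyConnected E)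
    (hne : (Wkappa E κ).Nonempty)
    (Eanch : X × X → Set (Y × Y))
    (hsub : ∀ p ∈ lumpedEdges E κ, ∀ e ∈ Eanch p, e ∈ E ∧ κ e.1 = p.1 ∧ κ e.2 = p.2)
    (hinj : ∀ p ∈ lumpedEdges E κ, ∀ e ∈ Eanch p, ∀ e' ∈ Eanch p, e.1 = e'.1 → e = e')
    (hcov : ∀ p ∈ lumpedEdges E κ, ∀ y : Y, κ y = p.1 → ∃ e ∈ Eanch p, e.1 = y) :
    LinearIndependent ℝ (anchorBasis E κ Eanch) ∧
      Submodule.span ℝ (Set.range (anchorBasis E κ Eanch)) =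
        Submodule.span ℝ (Gkappa E κ) ∧
      Module.finrank ℝ ↥(Submodule.span ℝ (Gkappa E κ)) =
        (Uset E κ).ncard + (Rset E κ).ncard := by
  classical
  haveI fU : Fintype ↥(Uset E κ) := Fintype.ofFinite _
  haveI fR : Fintype ↥(Rset E κ) := Fintype.ofFinite _
  obtain ⟨F₀, ⟨hF₀pos, hF₀row⟩, hF₀lump⟩ := hne
  -- choose, for each block in U, an anchor edge whose source is a non-merging row
  have hewex : ∀ u : ↥(Uset E κ), ∃ e : Y × Y, e ∈ Eanch u.1 ∧ e ∈ E ∧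
      κ e.1 = u.1.1 ∧ κ e.2 = u.1.2 ∧ e.1 ∉ mergingRows E κ u.1.1 u.1.2 := by
    rintro ⟨⟨x, x'⟩, hD, y, hy, hym⟩
    obtain ⟨e, heA, he1⟩ := hcov (x, x') hD y hy
    obtain ⟨heE, hex, hex'⟩ := hsub (x, x') hD e heA
    exact ⟨e, heA, heE, hex, hex', by rw [he1]; exact hym⟩
  choose ew hew1 hew2 hew3 hew4 hew5 using hewex
  -- a non-merging edge of a block is an anchor edge of that block
  have hanch : ∀ e : Y × Y, e ∈ E → e.1 ∉ mergingRows E κ (κ e.1) (κ e.2) →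
      e ∈ Eanch (κ e.1, κ e.2) := by
    intro e heE hnm
    have hD : (κ e.1, κ e.2) ∈ lumpedEdges E κ := ⟨e, heE, rfl, rfl⟩
    obtain ⟨e', he'A, he'1⟩ := hcov (κ e.1, κ e.2) hD e.1 rfl
    obtain ⟨he'E, he'x, he'x'⟩ := hsub _ hD e' he'A
    have hsnd : e'.2 = e.2 := by
      by_contra hne
      exact hnm ⟨rfl, e'.2, e.2, hne, he'x', rfl,
        (by rw [← he'1, Prod.mk.eta]; exact he'E), (by rw [Prod.mk.eta]; exact heE)⟩
    have hee : e' = e := Prod.ext he'1 hsnd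
    exact hee ▸ he'A
  -- pointwise values of the candidate family
  have hBl : ∀ (u : ↥(Uset E κ)) (y y' : Y),
      anchorBasis E κ Eanch (Sum.inl u) y y' = if (y, y') ∈ Eanch u.1 then 1 else 0 := by
    intro u y y'; simp [anchorBasis, Set.indicator_apply]
  have hBr : ∀ (r : ↥(Rset E κ)) (y y' : Y),
      anchorBasis E κ Eanch (Sum.inr r) y y' = if (y, y') = r.1 then 1 else 0 := by
    intro r y y'; simp [anchorBasis, Set.indicator_apply]
  -- evaluation of the two partial sums
  have S1a : ∀ (g : (↥(Uset E κ) ⊕ ↥(Rset E κ)) → ℝ) (y y' : Y) (u₀ : ↥(Uset E κ)),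
      (y, y') ∈ Eanch u₀.1 →
      ∑ u, g (Sum.inl u) * (if (y, y') ∈ Eanch u.1 then 1 else 0) = g (Sum.inl u₀) := by
    intro g y y' u₀ h₀
    have hz : ∀ u, u ≠ u₀ → g (Sum.inl u) * (if (y, y') ∈ Eanch u.1 then 1 else 0) = 0 := by
      intro u hu
      rw [if_neg, mul_zero]
      intro hmem
      apply hu
      obtain ⟨-, hx1, hx2⟩ := hsub u.1 u.2.1 _ hmem
      obtain ⟨-, hy1, hy2⟩ := hsub u₀.1 u₀.2.1 _ h₀
      exact Subtype.ext (Prod.ext (hx1.symm.trans hy1) (hx2.symm.trans hy2))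
    rw [Fintype.sum_eq_single u₀ hz, if_pos h₀, mul_one]
  have S1b : ∀ (g : (↥(Uset E κ) ⊕ ↥(Rset E κ)) → ℝ) (y y' : Y),
      (∀ u : ↥(Uset E κ), (y, y') ∉ Eanch u.1) →
      ∑ u, g (Sum.inl u) * (if (y, y') ∈ Eanch u.1 then 1 else 0) = 0 := by
    intro g y y' hno
    apply Finset.sum_eq_zero
    intro u _
    rw [if_neg (hno u), mul_zero]
  have S2a : ∀ (g : (↥(Uset E κ) ⊕ ↥(Rset E κ)) → ℝ) (r₀ : ↥(Rset E κ)),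
      ∑ r, g (Sum.inr r) * (if (r₀.1.1, r₀.1.2) = r.1 then 1 else 0) = g (Sum.inr r₀) := by
    intro g r₀
    have hz : ∀ r, r ≠ r₀ → g (Sum.inr r) * (if (r₀.1.1, r₀.1.2) = r.1 then 1 else 0) = 0 := by
      intro r hr
      rw [if_neg, mul_zero]
      intro h
      exact hr (Subtype.ext (h.symm.trans Prod.mk.eta))
    rw [Fintype.sum_eq_single r₀ hz, if_pos Prod.mk.eta, mul_one]
  have S2b : ∀ (g : (↥(Uset E κ) ⊕ ↥(Rset E κ)) → ℝ) (y y' : Y), (y, y') ∉ Rset E κ →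
      ∑ r, g (Sum.inr r) * (if (y, y') = r.1 then 1 else 0) = 0 := by
    intro g y y' h
    apply Finset.sum_eq_zero
    intro r _
    rw [if_neg, mul_zero]
    intro heq
    exact h (by rw [heq]; exact r.2)
  -- splitting of the evaluated sum
  have hsplit : ∀ (g : (↥(Uset E κ) ⊕ ↥(Rset E κ)) → ℝ) (y y' : Y),
      (∑ i, g i • anchorBasis E κ Eanch i) y y' =
        (∑ u, g (Sum.inl u) * (if (y, y') ∈ Eanch u.1 then 1 else 0)) +
        (∑ r, g (Sum.inr r) * (if (y, y') = r.1 then 1 else 0)) := by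
    intro g y y'
    simp only [Finset.sum_apply, Pi.smul_apply, smul_eq_mul]
    rw [Fintype.sum_sum_type]
    simp only [hBl, hBr]
  -- linear independence
  have hLI : LinearIndependent ℝ (anchorBasis E κ Eanch) := by
    rw [Fintype.linearIndependent_iff]
    intro g hg
    have hg' : ∀ y y' : Y,
        (∑ u, g (Sum.inl u) * (if (y, y') ∈ Eanch u.1 then 1 else 0)) +
        (∑ r, g (Sum.inr r) * (if (y, y') = r.1 then 1 else 0)) = 0 := by
      intro y y'
      rw [← hsplit g y y', hg]
      rfl
    have hU0 : ∀ u, g (Sum.inl u) = 0 := by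
      intro u
      have h := hg' (ew u).1 (ew u).2
      rw [S1a g _ _ u (by rw [Prod.mk.eta]; exact hew1 u), S2b g _ _ ?_] at h
      · simpa using h
      · intro hmem
        exact hew5 u (by simpa only [hew3 u, hew4 u] using hmem.2)
    intro i
    cases i with
    | inl u => exact hU0 u
    | inr r =>
      have h := hg' r.1.1 r.1.2
      rw [S2a g r] at h
      have hz : (∑ u, g (Sum.inl u) * (if (r.1.1, r.1.2) ∈ Eanch u.1 then 1 else 0)) = 0 := by
        apply Finset.sum_eq_zero; intro u _; rw [hU0, zero_mul]
      rw [hz, zero_add] at h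
      exact h
  -- single-edge indicators for R are in the span of Gkappa
  have hRmem : ∀ e ∈ Rset E κ, (fun y y' => if (y, y') = e then (1:ℝ) else 0)
      ∈ Submodule.span ℝ (Gkappa E κ) := fun e he =>
    singleEdge_mem_span E κ hF₀pos hF₀lump he
  -- each member of the family is in the span of Gkappa
  have hrange : ∀ i, anchorBasis E κ Eanch i ∈ Submodule.span ℝ (Gkappa E κ) := by
    intro i
    cases i with
    | inr r =>
      have he : anchorBasis E κ Eanch (Sum.inr r)
          = fun y y' => if (y, y') = r.1 then (1:ℝ) else 0 :=
        funext fun y => funext fun y' => hBr r y y'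
      rw [he]
      exact hRmem r.1 r.2
    | inl u =>
      set RB : Finset (Y × Y) := Finset.univ.filter
        (fun e => e ∈ E ∧ κ e.1 = u.1.1 ∧ κ e.2 = u.1.2 ∧ e ∈ Rset E κ) with hRB
      set AB : Finset (Y × Y) := Finset.univ.filter
        (fun e => e ∈ Eanch u.1 ∧ e ∈ Rset E κ) with hAB
      have hiden : anchorBasis E κ Eanch (Sum.inl u) =
          (fun y y' => if (y, y') ∈ E ∧ κ y = u.1.1 ∧ κ y' = u.1.2 then (1:ℝ) else 0)
          - (∑ e ∈ RB, fun y y' => if (y, y') = e then (1:ℝ) else 0)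
          + (∑ e ∈ AB, fun y y' => if (y, y') = e then (1:ℝ) else 0) := by
        funext y y'
        simp only [Pi.add_apply, Pi.sub_apply, Finset.sum_apply, hBl]
        rw [Finset.sum_ite_eq RB (y, y') (fun _ => (1:ℝ)),
          Finset.sum_ite_eq AB (y, y') (fun _ => (1:ℝ))]
        by_cases hP : (y, y') ∈ Eanch u.1
        · obtain ⟨hPE, hPx, hPx'⟩ := hsub u.1 u.2.1 _ hP
          rw [if_pos hP, if_pos ⟨hPE, hPx, hPx'⟩]
          by_cases hPR : (y, y') ∈ Rset E κ
          · rw [if_pos (Finset.mem_filter.mpr ⟨Finset.mem_univ _, hPE, hPx, hPx', hPR⟩),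
              if_pos (Finset.mem_filter.mpr ⟨Finset.mem_univ _, hP, hPR⟩)]
            ring
          · have hn1 : (y, y') ∉ RB := fun hc => hPR (Finset.mem_filter.mp hc).2.2.2.2
            have hn2 : (y, y') ∉ AB := fun hc => hPR (Finset.mem_filter.mp hc).2.2
            rw [if_neg hn1, if_neg hn2]
            ring
        · have hn2 : (y, y') ∉ AB := fun hc => hP (Finset.mem_filter.mp hc).2.1
          rw [if_neg hP, if_neg hn2]
          by_cases hblock : (y, y') ∈ E ∧ κ y = u.1.1 ∧ κ y' = u.1.2
          · have hPR : (y, y') ∈ Rset E κ := by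
              by_contra hnR
              apply hP
              have hnm : ((y, y') : Y × Y).1 ∉
                  mergingRows E κ (κ ((y, y') : Y × Y).1) (κ ((y, y') : Y × Y).2) :=
                fun hm => hnR ⟨hblock.1, hm⟩
              have h := hanch (y, y') hblock.1 hnm
              rwa [hblock.2.1, hblock.2.2, Prod.mk.eta] at h
            rw [if_pos hblock,
              if_pos (Finset.mem_filter.mpr ⟨Finset.mem_univ _, hblock.1, hblock.2.1, hblock.2.2, hPR⟩)]
            ring
          · have hnRB : (y, y') ∉ RB := fun hc => hblock
              ⟨(Finset.mem_filter.mp hc).2.1, (Finset.mem_filter.mp hc).2.2.1,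
                (Finset.mem_filter.mp hc).2.2.2.1⟩
            rw [if_neg hblock, if_neg hnRB]
            ring
      rw [hiden]
      refine add_mem (sub_mem (blockIndicator_mem_span E κ hF₀pos hF₀lump u.1) ?_) ?_
      · exact Submodule.sum_mem _ (fun e he => hRmem e (Finset.mem_filter.mp he).2.2.2.2)
      · exact Submodule.sum_mem _ (fun e he => hRmem e (Finset.mem_filter.mp he).2.2)
  -- every element of Gkappa is in the span of the family
  have hGsub : Gkappa E κ ⊆ (Submodule.span ℝ (Set.range (anchorBasis E κ Eanch)) : Set _) := by
    rintro G ⟨F, hFpos, hFlump, rfl⟩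
    set g : (↥(Uset E κ) ⊕ ↥(Rset E κ)) → ℝ := Sum.elim
      (fun u => Real.log (F (ew u).1 (ew u).2))
      (fun r => Real.log (F r.1.1 r.1.2) -
        if h : (κ r.1.1, κ r.1.2) ∈ Uset E κ ∧ r.1 ∈ Eanch (κ r.1.1, κ r.1.2) then
          Real.log (F (ew ⟨(κ r.1.1, κ r.1.2), h.1⟩).1 (ew ⟨(κ r.1.1, κ r.1.2), h.1⟩).2)
        else 0) with hgdef
    have key : logMat E F = ∑ i, g i • anchorBasis E κ Eanch i := by
      funext y y'
      rw [hsplit g y y']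
      by_cases hE : (y, y') ∈ E
      · by_cases hR : (y, y') ∈ Rset E κ
        · have h2 : ∑ r, g (Sum.inr r) * (if (y, y') = r.1 then 1 else 0)
              = g (Sum.inr ⟨(y, y'), hR⟩) := S2a g ⟨(y, y'), hR⟩
          rw [h2]
          by_cases hcase : (κ y, κ y') ∈ Uset E κ ∧ (y, y') ∈ Eanch (κ y, κ y')
          · have h1 : ∑ u, g (Sum.inl u) * (if (y, y') ∈ Eanch u.1 then 1 else 0)
                = g (Sum.inl ⟨(κ y, κ y'), hcase.1⟩) := S1a g y y' _ hcase.2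
            rw [h1]
            simp only [logMat, Set.indicator_of_mem hE, hgdef, Sum.elim_inl, Sum.elim_inr]
            rw [dif_pos hcase]
            ring
          · have h1 : ∑ u, g (Sum.inl u) * (if (y, y') ∈ Eanch u.1 then 1 else 0) = 0 := by
              apply S1b g y y'
              intro u hmem
              obtain ⟨hE', hx1, hx2⟩ := hsub u.1 u.2.1 _ hmem
              have hu : u.1 = (κ y, κ y') := Prod.ext hx1.symm hx2.symm
              exact hcase ⟨hu ▸ u.2, by rw [← hu]; exact hmem⟩
            rw [h1, zero_add]
            simp only [logMat, Set.indicator_of_mem hE, hgdef, Sum.elim_inr]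
            rw [dif_neg hcase]
            ring
        · have h2 : ∑ r, g (Sum.inr r) * (if (y, y') = r.1 then 1 else 0) = 0 := S2b g y y' hR
          have hnm : ((y, y') : Y × Y).1 ∉
              mergingRows E κ (κ ((y, y') : Y × Y).1) (κ ((y, y') : Y × Y).2) :=
            fun hm => hR ⟨hE, hm⟩
          have hAmem : (y, y') ∈ Eanch (κ y, κ y') := hanch (y, y') hE hnm
          have hUmem : (κ y, κ y') ∈ Uset E κ :=
            ⟨⟨(y, y'), hE, rfl, rfl⟩, y, rfl, fun hm => hR ⟨hE, hm⟩⟩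
          have h1 : ∑ u, g (Sum.inl u) * (if (y, y') ∈ Eanch u.1 then 1 else 0)
              = g (Sum.inl ⟨(κ y, κ y'), hUmem⟩) := S1a g y y' _ hAmem
          rw [h1, h2, add_zero]
          simp only [logMat, Set.indicator_of_mem hE, hgdef, Sum.elim_inl]
          have hconst := F_const_on_nonmerging E κ F hFpos.1 hFlump
            (e₁ := (y, y')) (e₂ := ew ⟨(κ y, κ y'), hUmem⟩) hE (hew2 _)
            (hew3 ⟨(κ y, κ y'), hUmem⟩).symm (hew4 ⟨(κ y, κ y'), hUmem⟩).symm hnm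
            (by rw [hew3, hew4]; exact hew5 ⟨(κ y, κ y'), hUmem⟩)
          exact congrArg Real.log hconst
      · have h1 : ∑ u, g (Sum.inl u) * (if (y, y') ∈ Eanch u.1 then 1 else 0) = 0 :=
          S1b g y y' (fun u hmem => hE (hsub u.1 u.2.1 _ hmem).1)
        have h2 : ∑ r, g (Sum.inr r) * (if (y, y') = r.1 then 1 else 0) = 0 :=
          S2b g y y' (fun hmem => hE hmem.1)
        rw [h1, h2, add_zero]
        simp [logMat, Set.indicator_of_notMem hE]
    rw [key]
    exact Submodule.sum_mem _ fun i _ => Submodule.smul_mem _ _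
      (Submodule.subset_span (Set.mem_range_self i))
  have hspan : Submodule.span ℝ (Set.range (anchorBasis E κ Eanch))
      = Submodule.span ℝ (Gkappa E κ) := by
    apply le_antisymm
    · rw [Submodule.span_le]
      rintro - ⟨i, rfl⟩
      exact hrange i
    · rw [Submodule.span_le]
      exact hGsub
  refine ⟨hLI, hspan, ?_⟩
  rw [← hspan, finrank_span_eq_card hLI, Fintype.card_sum,
    ← Nat.card_coe_set_eq, ← Nat.card_coe_set_eq,
    Nat.card_eq_fintype_card, Nat.card_eq_fintype_card]
end
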